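/- arXiv:1706.04129 — 16 statements merged into one kernel-verified Lean document; each statement's English description precedes it below -/
import Mathlib

section
/- For every positive integer d, Skolem's function s_d(x₁,...,x_d) = Σ_{i=1}^{d} C(x₁ + x₂ + ⋯ + x_i + i − 1, i) is a d-tupling function for the non-negative integers, i.e. a bijection from ℕ^d to ℕ. -/
/-- Skolem's `d`-tupling function
`s_d(x₁,...,x_d) = Σ_{i=1}^{d} C(x₁ + ⋯ + x_i + i − 1, i)`
(indices shifted to be 0-based: the term for `i : Fin d` is
`C((x₀ + ⋯ + x_i) + i, i + 1)`). -/
def skolem (d : ℕ) (x : Fin d → ℕ) : ℕ :=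
  ∑ i : Fin d, ((∑ j ∈ Finset.Iic i, x j) + i.val).choose (i.val + 1)

lemma Iic_castSucc' (d : ℕ) (i : Fin d) :
    Finset.Iic (Fin.castSucc i) = (Finset.Iic i).map Fin.castSuccEmb := by
  ext j
  simp only [Finset.mem_Iic, Finset.mem_map, Fin.castSuccEmb, Fin.le_def, Fin.coe_castSucc]
  constructor
  · intro h
    refine ⟨⟨j.val, by omega⟩, by simpa using h, ?_⟩
    ext; simp
  · rintro ⟨k, hk, rfl⟩; simpa using hk

lemma skolem_zero (x : Fin 0 → ℕ) : skolem 0 x = 0 := by simp [skolem]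

lemma skolem_succ (d : ℕ) (x : Fin (d+1) → ℕ) :
    skolem (d+1) x = skolem d (Fin.init x) + ((∑ i, x i) + d).choose (d+1) := by
  unfold skolem
  rw [Fin.sum_univ_castSucc]
  congr 1
  · apply Finset.sum_congr rfl
    intro i _
    rw [Iic_castSucc', Finset.sum_map]
    simp only [Fin.coe_castSuccEmb, Fin.coe_castSucc]
    rfl
  · have : Finset.Iic (Fin.last d) = (Finset.univ : Finset (Fin (d+1))) := by
      ext j; simp [Fin.le_last]
    rw [this]
    simp

lemma sum_succ_eq (d : ℕ) (x : Fin (d+1) → ℕ) :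
    ∑ i, x i = (∑ i, Fin.init x i) + x (Fin.last d) := by
  rw [Fin.sum_univ_castSucc]; rfl

lemma skolem_lt (d : ℕ) : ∀ (Y : ℕ) (x : Fin d → ℕ), (∑ i, x i) ≤ Y →
    skolem d x < (Y + d).choose d := by
  induction d with
  | zero => intro Y x _; simp [skolem_zero]
  | succ d ih =>
    intro Y x hx
    set S := ∑ i, x i with hS
    have h1 : ∑ i, Fin.init x i ≤ S := by rw [sum_succ_eq] at hS; omega
    have h2 := ih S (Fin.init x) h1
    have h3 : (S + d + 1).choose (d + 1) = (S + d).choose d + (S + d).choose (d+1) :=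
      Nat.choose_succ_succ (S + d) d
    have h4 : (S + d + 1).choose (d + 1) ≤ (Y + d + 1).choose (d+1) :=
      Nat.choose_le_choose _ (by omega)
    have h5 : (Y + (d+1)).choose (d+1) = (Y + d + 1).choose (d+1) := rfl
    rw [skolem_succ, ← hS]
    omega

lemma skolem_exu (d : ℕ) : ∀ (Y n : ℕ), n < (Y + d).choose d →
    ∃! x : Fin d → ℕ, (∑ i, x i) ≤ Y ∧ skolem d x = n := by
  induction d with
  | zero =>
    intro Y n hn
    simp only [add_zero, Nat.choose_zero_right, Nat.lt_one_iff] at hn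
    subst hn
    exact ⟨fun i => i.elim0, ⟨by simp, skolem_zero _⟩, fun y _ => funext fun i => i.elim0⟩
  | succ d ih =>
    intro Y n hn
    have hn' : n < (Y + d + 1).choose (d + 1) := hn
    set f : ℕ → ℕ := fun s => (s + d).choose (d+1) with hf
    have hpascal : ∀ s, f (s + 1) = f s + (s + d).choose d := by
      intro s
      show (s + 1 + d).choose (d+1) = (s + d).choose (d+1) + (s + d).choose d
      rw [show s + 1 + d = s + d + 1 by omega, Nat.choose_succ_succ]
      simp only [Nat.succ_eq_add_one]; omega
    have hfmono : ∀ a b, a ≤ b → f a ≤ f b := fun a b h =>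
      Nat.choose_le_choose _ (by omega)
    have hf0 : f 0 ≤ n := by
      show (0 + d).choose (d+1) ≤ n
      rw [Nat.choose_eq_zero_of_lt (by omega)]
      omega
    set S := Nat.findGreatest (fun s => f s ≤ n) Y with hSdef
    have hSY : S ≤ Y := Nat.findGreatest_le Y
    have hS1 : f S ≤ n := Nat.findGreatest_spec (P := fun s => f s ≤ n) (Nat.zero_le Y) hf0
    have hS2 : n < f (S + 1) := by
      by_cases h : S + 1 ≤ Y
      · have := Nat.findGreatest_is_greatest (P := fun s => f s ≤ n) (by omega : S < S + 1) h
        omega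
      · have hSY' : S = Y := by omega
        have hYf : f (Y + 1) = (Y + d + 1).choose (d+1) := by
          show (Y + 1 + d).choose (d+1) = _
          congr 1
          omega
        rw [hSY', hYf]
        exact hn'
    have hr : n - f S < (S + d).choose d := by
      have := hpascal S; omega
    obtain ⟨p, ⟨hp1, hp2⟩, hpu⟩ := ih S (n - f S) hr
    refine ⟨Fin.snoc p (S - ∑ i, p i), ⟨?_, ?_⟩, ?_⟩
    · rw [sum_succ_eq]
      simp only [Fin.init_snoc, Fin.snoc_last]
      omega
    · rw [skolem_succ]
      have hsum : ∑ i, (Fin.snoc p (S - ∑ i, p i) : Fin (d+1) → ℕ) i = S := by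
        rw [sum_succ_eq]
        simp only [Fin.init_snoc, Fin.snoc_last]
        omega
      rw [hsum, Fin.init_snoc, hp2]
      have hfs : (S + d).choose (d+1) = f S := rfl
      omega
    · rintro y ⟨hy1, hy2⟩
      rw [skolem_succ] at hy2
      set T := ∑ i, y i with hT
      have hyinit : ∑ i, Fin.init y i ≤ T := by rw [sum_succ_eq] at hT; omega
      have hlt := skolem_lt d T (Fin.init y) hyinit
      have hy2' : skolem d (Fin.init y) + f T = n := hy2
      have hfT2 : n < f (T + 1) := by have := hpascal T; omega
      have hST : S = T := by
        rcases Nat.lt_trichotomy S T with h | h | h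
        · have := hfmono (S + 1) T h; omega
        · exact h
        · have := hfmono (T + 1) S h; omega
      have hfST : f S = f T := by rw [hST]
      have hyp : Fin.init y = p := hpu _ ⟨by omega, by omega⟩
      have hylast : y (Fin.last d) = S - ∑ i, p i := by
        rw [sum_succ_eq] at hT
        rw [← hyp]
        omega
      rw [← hyp] at hylast ⊢
      rw [← hylast]
      exact (Fin.snoc_init_self y).symm

lemma lt_choose_self (n : ℕ) : ∀ d, 0 < d → n < (n + d).choose d := by
  intro d
  induction d with
  | zero => omega
  | succ d ih =>
    intro _
    rcases Nat.eq_zero_or_pos d with h | h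
    · subst h; simp
    · have h1 := ih h
      have h2 : (n + d + 1).choose (d + 1) = (n + d).choose d + (n + d).choose (d+1) :=
        Nat.choose_succ_succ _ _
      have h3 : (n + (d+1)).choose (d+1) = (n + d + 1).choose (d+1) := rfl
      omega

/-- For every positive integer `d`, Skolem's function is a bijection from ℕ^d to ℕ. -/
theorem skolem_bijective (d : ℕ) (hd : 0 < d) :
    Function.Bijective (skolem d) := by
  constructor
  · intro a b hab
    have hbound : skolem d a < (max (∑ i, a i) (∑ i, b i) + d).choose d :=
      skolem_lt d _ a (le_max_left _ _)
    obtain ⟨x, _, hxu⟩ := skolem_exu d (max (∑ i, a i) (∑ i, b i)) (skolem d a) hbound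
    have h1 := hxu a ⟨le_max_left _ _, rfl⟩
    have h2 := hxu b ⟨le_max_right _ _, hab.symm⟩
    rw [h1, h2]
  · intro n
    obtain ⟨x, ⟨_, hx⟩, _⟩ := skolem_exu d n n (lt_choose_self n d hd)
    exact ⟨x, hx⟩
end

section
/- For every positive integer d, Chowla's function χ_d(x₁,...,x_d) = C(x₁+⋯+x_d+d, d) − 1 − Σ_{i=1}^{d−1} C(x_{i+1}+⋯+x_d+d−i−1, d−i) is a d-tupling function for the non-negative integers, i.e. a bijection from ℕ^d to ℕ. -/
/-- Chowla's `d`-tupling function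
`χ_d(x₁,...,x_d) = C(x₁+⋯+x_d+d, d) − 1 − Σ_{i=1}^{d−1} C(x_{i+1}+⋯+x_d+d−i−1, d−i)`
(with 1-based index `i` ranging over `1 ≤ i < d`; the suffix `x_{i+1}+⋯+x_d`
corresponds to the 0-based coordinates `j` with `i ≤ j`). -/
def chowla (d : ℕ) (x : Fin d → ℕ) : ℕ :=
  ((∑ j, x j) + d).choose d - 1 -
    ∑ i ∈ Finset.Ico 1 d,
      ((∑ j ∈ Finset.univ.filter (fun j : Fin d => i ≤ j.val), x j) + (d - i - 1)).choose (d - i)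


def chowlaS (d : ℕ) (x : Fin d → ℕ) (i : ℕ) : ℕ :=
  ∑ j ∈ Finset.univ.filter (fun j : Fin d => i ≤ j.val), x j

def chowlaT (d : ℕ) (x : Fin d → ℕ) : ℕ :=
  ∑ i ∈ Finset.Ico 1 d, (chowlaS d x i + (d - i - 1)).choose (d - i)

lemma chowlaS_cons (d : ℕ) (h : ℕ) (y : Fin d → ℕ) (i : ℕ) :
    chowlaS (d+1) (Fin.cons h y) (i+1) = chowlaS d y i := by
  unfold chowlaS
  rw [Finset.sum_filter, Finset.sum_filter, Fin.sum_univ_succ]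
  simp [Fin.val_succ, Nat.succ_le_succ_iff]

lemma chowlaS_zero_eq (d : ℕ) (x : Fin d → ℕ) : chowlaS d x 0 = ∑ j, x j := by
  unfold chowlaS
  simp

lemma chowlaT_cons (d : ℕ) (hd : 1 ≤ d) (h : ℕ) (y : Fin d → ℕ) :
    chowlaT (d+1) (Fin.cons h y) = ((∑ j, y j) + (d-1)).choose d + chowlaT d y := by
  unfold chowlaT
  rw [Finset.sum_Ico_eq_sum_range]
  simp only [Nat.add_sub_cancel]
  have hre : ∀ k, (chowlaS (d+1) (Fin.cons h y) (1 + k) + (d + 1 - (1 + k) - 1)).choose (d + 1 - (1 + k))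
      = (chowlaS d y k + (d - k - 1)).choose (d - k) := by
    intro k
    have h1 : 1 + k = k + 1 := by omega
    have h2 : d + 1 - (k + 1) - 1 = d - k - 1 := by omega
    have h3 : d + 1 - (k + 1) = d - k := by omega
    rw [h1, chowlaS_cons, h2, h3]
  rw [Finset.sum_congr rfl (fun k _ => hre k)]
  rw [Finset.range_eq_Ico, Finset.sum_eq_sum_Ico_succ_bot hd]
  rw [chowlaS_zero_eq]
  simp

lemma chowla_eq_T (d : ℕ) (x : Fin d → ℕ) :
    chowla d x = ((∑ j, x j) + d).choose d - 1 - chowlaT d x := rfl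

-- C(s+d-1, d) ≤ C(s+d, d+1) for d ≥ 1
lemma choose_aux (s d : ℕ) (hd : 1 ≤ d) : (s + d - 1).choose d ≤ (s + d).choose (d+1) := by
  rcases s with _ | m
  · rw [Nat.zero_add, Nat.choose_eq_zero_of_lt (by omega : d - 1 < d)]
    exact Nat.zero_le _
  · have e1 : m + 1 + d - 1 = d + m := by omega
    have e2 : m + 1 + d = d + 1 + m := by omega
    rw [e1, e2, Nat.choose_symm_add, Nat.choose_symm_add]
    exact Nat.choose_le_choose m (by omega)

lemma chowlaT_lt (d : ℕ) (hd : 1 ≤ d) (x : Fin d → ℕ) :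
    1 + chowlaT d x ≤ ((∑ j, x j) + d).choose d := by
  induction d, hd using Nat.le_induction with
  | base =>
    have : chowlaT 1 x = 0 := by simp [chowlaT]
    rw [this]
    have := Nat.choose_pos (show 1 ≤ (∑ j, x j) + 1 by omega)
    omega
  | succ d hd ih =>
    rw [← Fin.cons_self_tail x]
    set y := Fin.tail x with hy
    set h := x 0 with hh
    have hsum : ∑ j, (Fin.cons h y : Fin (d+1) → ℕ) j = h + ∑ j, y j := Fin.sum_cons h y
    rw [hsum, chowlaT_cons d hd h y]
    have iy := ih y
    have h1 : ((∑ j, y j) + (d-1)).choose d ≤ ((∑ j, y j) + d).choose (d+1) := by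
      have := choose_aux (∑ j, y j) d hd
      have e : (∑ j, y j) + d - 1 = (∑ j, y j) + (d - 1) := by omega
      rwa [e] at this
    have h2 : ((∑ j, y j) + d).choose (d+1) + ((∑ j, y j) + d).choose d
        = ((∑ j, y j) + d + 1).choose (d+1) := by
      rw [Nat.choose_succ_succ ((∑ j, y j) + d) d]
      simp only [Nat.succ_eq_add_one]
      omega
    have h3 : ((∑ j, y j) + d + 1).choose (d+1) ≤ (h + (∑ j, y j) + (d+1)).choose (d+1) :=
      Nat.choose_le_choose _ (by omega)
    omega

lemma chowla_add_eq (d : ℕ) (hd : 1 ≤ d) (x : Fin d → ℕ) :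
    chowla d x + (1 + chowlaT d x) = ((∑ j, x j) + d).choose d := by
  have := chowlaT_lt d hd x
  rw [chowla_eq_T]
  omega

lemma chowla_rec (d : ℕ) (hd : 1 ≤ d) (h : ℕ) (y : Fin d → ℕ) :
    chowla (d+1) (Fin.cons h y) + (((∑ j, y j) + (d-1)).choose d + ((∑ j, y j) + d).choose d)
      = (h + (∑ j, y j) + (d+1)).choose (d+1) + chowla d y := by
  have E1 := chowla_add_eq (d+1) (by omega) (Fin.cons h y)
  have E2 := chowla_add_eq d hd y
  rw [chowlaT_cons d hd h y, Fin.sum_cons] at E1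
  omega

lemma lt_choose_add (d : ℕ) (hd : 1 ≤ d) (m : ℕ) : m < (m + d).choose d := by
  obtain ⟨e, rfl⟩ : ∃ e, d = e + 1 := ⟨d - 1, by omega⟩
  induction m with
  | zero => simp
  | succ m ih =>
    have e1 : m + 1 + (e + 1) = (m + e + 1) + 1 := by omega
    rw [e1, Nat.choose_succ_succ (m+e+1) e]
    have h1 : 0 < (m+e+1).choose e := Nat.choose_pos (by omega)
    have h2 : m + (e+1) = m + e + 1 := by omega
    rw [h2] at ih
    simp only [Nat.succ_eq_add_one]
    omega

lemma find_interval (d : ℕ) (hd : 1 ≤ d) (m u : ℕ) (hu : m < (u + d).choose d) :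
    ∃ s, s ≤ u ∧ (s + d - 1).choose d ≤ m ∧ m < (s + d).choose d := by
  have hex : ∃ s, m < (s + d).choose d := ⟨u, hu⟩
  classical
  refine ⟨Nat.find hex, Nat.find_min' hex hu, ?_, Nat.find_spec hex⟩
  rcases Nat.eq_zero_or_pos (Nat.find hex) with h0 | h0
  · rw [h0, Nat.choose_eq_zero_of_lt (by omega : 0 + d - 1 < d)]
    exact Nat.zero_le _
  · have := Nat.find_min hex (show Nat.find hex - 1 < Nat.find hex by omega)
    have e : Nat.find hex - 1 + d = Nat.find hex + d - 1 := by omega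
    rw [e] at this
    omega

theorem chowla_key (d : ℕ) (hd : 1 ≤ d) (t : ℕ) :
    (∀ x : Fin d → ℕ, (∑ j, x j) = t →
      (t + d - 1).choose d ≤ chowla d x ∧ chowla d x < (t + d).choose d) ∧
    (∀ x y : Fin d → ℕ, (∑ j, x j) = t → (∑ j, y j) = t →
      chowla d x = chowla d y → x = y) ∧
    (∀ n, (t + d - 1).choose d ≤ n → n < (t + d).choose d →
      ∃ x : Fin d → ℕ, (∑ j, x j) = t ∧ chowla d x = n) := by
  induction d, hd using Nat.le_induction generalizing t with
  | base =>
    have hc : ∀ x : Fin 1 → ℕ, chowla 1 x = x 0 := by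
      intro x
      simp [chowla, Fin.sum_univ_one]
    have hs : ∀ x : Fin 1 → ℕ, (∑ j, x j) = x 0 := fun x => Fin.sum_univ_one x
    refine ⟨?_, ?_, ?_⟩
    · intro x hx
      rw [hc, ← hs x, hx]
      constructor
      · simp
      · simp [Nat.choose_one_right]
    · intro x y hx hy he
      rw [hc, hc] at he
      funext j
      rw [Fin.eq_zero j, he]
    · intro n hn1 hn2
      simp only [Nat.add_sub_cancel, Nat.choose_one_right] at hn1 hn2
      refine ⟨fun _ => n, ?_, ?_⟩
      · rw [hs]
        omega
      · rw [hc]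
  | succ d hd ih =>
    -- decomposition facts
    have hdecomp : ∀ x : Fin (d+1) → ℕ, (∑ j, x j) = t →
        chowla (d+1) x + (((∑ j, Fin.tail x j) + (d-1)).choose d
            + ((∑ j, Fin.tail x j) + d).choose d)
          = (t + (d+1)).choose (d+1) + chowla d (Fin.tail x)
          ∧ x 0 + (∑ j, Fin.tail x j) = t := by
      intro x hx
      have hc := chowla_rec d hd (x 0) (Fin.tail x)
      rw [Fin.cons_self_tail] at hc
      have hsx : x 0 + ∑ j, Fin.tail x j = t := by
        rw [← hx, Fin.sum_univ_succ]
        rfl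
      rw [hsx] at hc
      exact ⟨hc, hsx⟩
    have hPascal : (t + (d+1)).choose (d+1)
        = (t + d).choose (d+1) + (t + d).choose d := by
      have e : t + (d+1) = (t+d) + 1 := by omega
      rw [e, Nat.choose_succ_succ (t+d) d]
      simp only [Nat.succ_eq_add_one]
      omega
    have egoal : t + (d+1) - 1 = t + d := by omega
    refine ⟨?_, ?_, ?_⟩
    · -- bounds
      intro x hx
      obtain ⟨hc, hsx⟩ := hdecomp x hx
      set s := ∑ j, Fin.tail x j with hsdef
      have hb := (ih s).1 (Fin.tail x) rfl
      have hmono : (s + d).choose d ≤ (t + d).choose d :=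
        Nat.choose_le_choose d (by omega)
      have hAB : s + d - 1 = s + (d - 1) := by omega
      rw [← hAB] at hc
      rw [egoal]
      omega
    · -- injectivity
      intro x y hx hy he
      obtain ⟨hcx, hsx⟩ := hdecomp x hx
      obtain ⟨hcy, hsy⟩ := hdecomp y hy
      have hbx := (ih (∑ j, Fin.tail x j)).1 (Fin.tail x) rfl
      have hby := (ih (∑ j, Fin.tail y j)).1 (Fin.tail y) rfl
      have hABx : (∑ j, Fin.tail x j) + d - 1 = (∑ j, Fin.tail x j) + (d-1) := by omega
      have hABy : (∑ j, Fin.tail y j) + d - 1 = (∑ j, Fin.tail y j) + (d-1) := by omega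
      rw [hABx] at hbx
      rw [hABy] at hby
      have hss : (∑ j, Fin.tail x j) = (∑ j, Fin.tail y j) := by
        rcases Nat.lt_trichotomy (∑ j, Fin.tail x j) (∑ j, Fin.tail y j) with hlt | heq | hgt
        · exfalso
          have hBA : ((∑ j, Fin.tail x j) + d).choose d
              ≤ ((∑ j, Fin.tail y j) + (d - 1)).choose d := by
            rw [← hABy]
            exact Nat.choose_le_choose d (by omega)
          omega
        · exact heq
        · exfalso
          have hBA : ((∑ j, Fin.tail y j) + d).choose d
              ≤ ((∑ j, Fin.tail x j) + (d - 1)).choose d := by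
            rw [← hABx]
            exact Nat.choose_le_choose d (by omega)
          omega
      rw [hss] at hcx hsx
      have hr : chowla d (Fin.tail x) = chowla d (Fin.tail y) := by omega
      have htail : Fin.tail x = Fin.tail y :=
        (ih (∑ j, Fin.tail y j)).2.1 (Fin.tail x) (Fin.tail y) hss rfl hr
      have hhead : x 0 = y 0 := by omega
      rw [← Fin.cons_self_tail x, ← Fin.cons_self_tail y, htail, hhead]
    · -- surjectivity
      intro n hn1 hn2
      rw [egoal] at hn1
      have hmlt : (t + (d+1)).choose (d+1) - 1 - n < (t + d).choose d := by omega
      obtain ⟨s, hsu, hm1, hm2⟩ := find_interval d hd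
        ((t + (d+1)).choose (d+1) - 1 - n) t hmlt
      obtain ⟨y, hysum, hyval⟩ := (ih s).2.2 (n + (s + d - 1).choose d + (s + d).choose d
          - (t + (d+1)).choose (d+1)) (by omega) (by omega)
      refine ⟨Fin.cons (t - s) y, ?_, ?_⟩
      · rw [Fin.sum_cons, hysum]
        omega
      · have hc := chowla_rec d hd (t - s) y
        rw [hysum] at hc
        have e2 : t - s + s = t := by omega
        rw [e2] at hc
        have hAB : s + d - 1 = s + (d - 1) := by omega
        rw [← hAB] at hc
        omega

/-- For every positive integer `d`, Chowla's function is a bijection from ℕ^d to ℕ. -/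
theorem chowla_bijective (d : ℕ) (hd : 0 < d) :
    Function.Bijective (chowla d) := by
  constructor
  · intro x y he
    have hbx := (chowla_key d hd (∑ j, x j)).1 x rfl
    have hby := (chowla_key d hd (∑ j, y j)).1 y rfl
    have hss : (∑ j, x j) = (∑ j, y j) := by
      rcases Nat.lt_trichotomy (∑ j, x j) (∑ j, y j) with hlt | heq | hgt
      · exfalso
        have hBA : ((∑ j, x j) + d).choose d ≤ ((∑ j, y j) + d - 1).choose d :=
          Nat.choose_le_choose d (by omega)
        omega
      · exact heq
      · exfalso
        have hBA : ((∑ j, y j) + d).choose d ≤ ((∑ j, x j) + d - 1).choose d :=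
          Nat.choose_le_choose d (by omega)
        omega
    exact (chowla_key d hd (∑ j, y j)).2.1 x y hss rfl he
  · intro n
    obtain ⟨s, _, h1, h2⟩ := find_interval d hd n n (lt_choose_add d hd n)
    obtain ⟨x, _, hx⟩ := (chowla_key d hd s).2.2 n h1 h2
    exact ⟨x, hx⟩
end

section
/- Let d be any integer greater than 2. Then χ_d cannot be obtained by permuting the arguments of s_d: for every permutation π of {1,...,d} there exists a point (x₁,...,x_d) ∈ ℕ^d such that χ_d(x₁,...,x_d) ≠ s_d(x_{π(1)},...,x_{π(d)}). -/
lemma two_mul_choose (k : ℕ) (hk : 1 ≤ k) :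
    2 * (2*k-1).choose k = (2*k).choose k := by
  obtain ⟨m, rfl⟩ := Nat.exists_eq_add_of_le hk
  have e1 : 2*(1+m)-1 = 2*m+1 := by omega
  have e2 : 2*(1+m) = (2*m+1)+1 := by omega
  have e3 : 1+m = m+1 := by omega
  rw [e1, e2, e3]
  conv_rhs => rw [Nat.choose_succ_succ']
  have hsym := Nat.choose_symm (n := 2*m+1) (k := m+1) (by omega)
  have e4 : 2*m+1 - (m+1) = m := by omega
  rw [e4] at hsym
  omega

lemma key_lt (d : ℕ) (hd : 3 ≤ d) :
    ∑ k ∈ Finset.range d, (2*k).choose k < (2*d-1).choose d := by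
  induction d, hd using Nat.le_induction with
  | base => decide
  | succ d hd ih =>
    rw [Finset.sum_range_succ]
    have h1 : 2 * (2*d-1).choose d = (2*d).choose d := two_mul_choose d (by omega)
    have h2 := Nat.add_one_mul_choose_eq (2*d) d
    have h3 : 2*(d+1)-1 = 2*d+1 := by omega
    rw [h3]
    have hC : 0 < (2*d).choose d := Nat.choose_pos (by omega)
    have h2' : (2*d+1) * (2*d).choose d = (2*d+1).choose (d+1) * (d+1) := by
      simpa [Nat.succ_eq_add_one] using h2
    nlinarith [ih]

lemma skolem_const_one (d : ℕ) :
    skolem d (fun _ => 1) = ∑ k ∈ Finset.range d, (2*k+1).choose (k+1) := by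
  unfold skolem
  rw [← Fin.sum_univ_eq_sum_range (fun k => (2*k+1).choose (k+1)) d]
  refine Finset.sum_congr rfl fun i _ => ?_
  have h : ∑ _j ∈ Finset.Iic i, (1:ℕ) = i.val + 1 := by
    rw [Finset.sum_const, smul_eq_mul, mul_one]
    exact Fin.card_Iic i
  rw [h]
  congr 1
  omega

lemma chowla_const_one (d : ℕ) (_hd : 1 ≤ d) :
    chowla d (fun _ => 1) =
      (2*d).choose d - 1 - ∑ i ∈ Finset.Ico 1 d, (2*(d-i)-1).choose (d-i) := by
  unfold chowla
  have h0 : ∑ _j : Fin d, (1:ℕ) = d := by simp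
  rw [h0]
  have h1 : d + d = 2*d := by omega
  rw [h1]
  congr 1
  refine Finset.sum_congr rfl fun i hi => ?_
  rw [Finset.mem_Ico] at hi
  have hcard : (Finset.univ.filter (fun j : Fin d => i ≤ j.val)).card = d - i := by
    rw [Finset.card_filter]
    rw [Fin.sum_univ_eq_sum_range (fun k => if i ≤ k then 1 else 0) d]
    rw [← Finset.card_filter]
    have : Finset.filter (fun j => i ≤ j) (Finset.range d) = Finset.Ico i d := by
      ext j; simp [Finset.mem_Ico, and_comm]
    rw [this, Nat.card_Ico]
  have hsum : ∑ _j ∈ Finset.univ.filter (fun j : Fin d => i ≤ j.val), (1:ℕ) = d - i := by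
    rw [Finset.sum_const, smul_eq_mul, mul_one, hcard]
  rw [hsum]
  congr 1
  omega

lemma reflect_sum (d : ℕ) :
    ∑ i ∈ Finset.Ico 1 d, (2*(d-i)-1).choose (d-i)
      = ∑ j ∈ Finset.Ico 1 d, (2*j-1).choose j := by
  refine Finset.sum_nbij' (fun i => d - i) (fun j => d - j) ?_ ?_ ?_ ?_ ?_
  · intro a ha; simp only [Finset.mem_Ico] at ha ⊢; omega
  · intro a ha; simp only [Finset.mem_Ico] at ha ⊢; omega
  · intro a ha; simp only [Finset.mem_Ico] at ha; omega
  · intro a ha; simp only [Finset.mem_Ico] at ha; omega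
  · intro a _; rfl

/-- For `d > 2`, Chowla's function cannot be obtained by permuting the arguments of
Skolem's function: for every permutation `π` of the indices, there is a point `x ∈ ℕ^d`
with `χ_d(x) ≠ s_d(x ∘ π)`. -/
theorem chowla_not_permutation_of_skolem (d : ℕ) (hd : 2 < d) (π : Equiv.Perm (Fin d)) :
    ∃ x : Fin d → ℕ, chowla d x ≠ skolem d (fun i => x (π i)) := by
  refine ⟨fun _ => 1, ?_⟩
  show chowla d (fun _ => 1) ≠ skolem d (fun _ => 1)
  set S := ∑ j ∈ Finset.Ico 1 d, (2*j-1).choose j with hS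
  have hch : chowla d (fun _ => 1) = (2*d).choose d - 1 - S := by
    rw [chowla_const_one d (by omega), reflect_sum]
  have hsk : skolem d (fun _ => 1) = S + (2*d-1).choose d := by
    rw [skolem_const_one]
    have e : ∑ k ∈ Finset.range d, (2*k+1).choose (k+1)
        = ∑ j ∈ Finset.Ico 1 (d+1), (2*j-1).choose j := by
      rw [Finset.sum_Ico_eq_sum_range]
      refine Finset.sum_congr (by norm_num) fun k _ => ?_
      congr 1 <;> omega
    rw [e, Finset.sum_Ico_succ_top (by omega)]
  have hkey := key_lt d (by omega)
  have hsplit : ∑ k ∈ Finset.range d, (2*k).choose k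
      = 1 + ∑ j ∈ Finset.Ico 1 d, (2*j).choose j := by
    rw [Finset.range_eq_Ico, Finset.sum_eq_sum_Ico_succ_bot (by omega)]
    norm_num
  have hdouble : ∑ j ∈ Finset.Ico 1 d, (2*j).choose j = 2 * S := by
    rw [hS, Finset.mul_sum]
    refine Finset.sum_congr rfl fun j hj => ?_
    rw [Finset.mem_Ico] at hj
    exact (two_mul_choose j hj.1).symm
  have h2C : 2 * (2*d-1).choose d = (2*d).choose d := two_mul_choose d (by omega)
  rw [hch, hsk]
  omega
end

section
/- Let f : ℕ^d → ℕ be any d-tupling function. A function σ : ℕ^d → ℕ is a shell numbering for f if and only if for every point x ∈ ℕ^d, with n = σ(x), the extended-natural cardinality of U_σ^{<n} is at most f(x) and f(x) is strictly less than the extended-natural cardinality of U_σ^{<n+1} (so in particular, if U_σ^{<n+1} is infinite the upper inequality holds automatically, and if U_σ^{<n} is infinite the lower inequality fails for every value of f(x)). -/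
/-- For a `d`-tupling function `f : ℕ^d → ℕ`, a function `σ : ℕ^d → ℕ` is a shell
numbering for `f` if and only if for every `x ∈ ℕ^d`, with `n = σ(x)`,
`|U_σ^{<n}| ≤ f(x) < |U_σ^{<n+1}|`, where `U_σ^{<n} = {y : σ(y) < n}` and the
cardinalities are taken in the extended natural numbers. -/
theorem shell_numbering_iff_encard (d : ℕ) (hd : 0 < d)
    (f : (Fin d → ℕ) → ℕ) (hf : Function.Bijective f) (σ : (Fin d → ℕ) → ℕ) :
    (∀ x y : Fin d → ℕ, σ x < σ y → f x < f y) ↔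
      ∀ x : Fin d → ℕ,
        {y : Fin d → ℕ | σ y < σ x}.encard ≤ (f x : ℕ∞) ∧
          (f x : ℕ∞) < {y : Fin d → ℕ | σ y < σ x + 1}.encard := by
  have hIio : ∀ n : ℕ, (Set.Iio n).encard = (n : ℕ∞) := by
    intro n
    rw [← Finset.coe_Iio, Set.encard_coe_eq_coe_finsetCard, Nat.card_Iio]
  constructor
  · intro h x
    constructor
    · have himg : f '' {y | σ y < σ x} ⊆ Set.Iio (f x) := by
        rintro _ ⟨y, hy, rfl⟩
        exact h y x hy
      calc {y : Fin d → ℕ | σ y < σ x}.encard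
          = (f '' {y | σ y < σ x}).encard :=
            (Set.InjOn.encard_image (hf.1.injOn)).symm
        _ ≤ (Set.Iio (f x)).encard := Set.encard_le_encard himg
        _ = (f x : ℕ∞) := hIio _
    · set g := Function.invFun f with hg
      have hginv : Function.RightInverse g f := Function.rightInverse_invFun hf.2
      have hgi : Function.Injective g := hginv.injective
      have himg : g '' Set.Iio (f x + 1) ⊆ {y | σ y < σ x + 1} := by
        rintro _ ⟨k, hk, rfl⟩
        have hfk : f (g k) ≤ f x := by
          simp only [Set.mem_Iio] at hk; rw [hginv k]; omega
        by_contra hc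
        have : σ x < σ (g k) := by
          simp only [Set.mem_setOf_eq] at hc; omega
        exact absurd (h x (g k) this) (by omega)
      calc (f x : ℕ∞) < ((f x + 1 : ℕ) : ℕ∞) := by
            exact_mod_cast Nat.lt_succ_self _
        _ = (Set.Iio (f x + 1)).encard := (hIio _).symm
        _ = (g '' Set.Iio (f x + 1)).encard :=
            (Set.InjOn.encard_image (hgi.injOn)).symm
        _ ≤ {y : Fin d → ℕ | σ y < σ x + 1}.encard := Set.encard_le_encard himg
  · intro h x y hxy
    have h1 := (h x).2
    have h2 := (h y).1
    have hsub : {z : Fin d → ℕ | σ z < σ x + 1} ⊆ {z | σ z < σ y} := fun z hz =>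
      show σ z < σ y from lt_of_lt_of_le (show σ z < σ x + 1 from hz) (show σ x + 1 ≤ σ y from hxy)
    have := lt_of_lt_of_le h1 (le_trans (Set.encard_le_encard hsub) h2)
    exact_mod_cast this
end

section
/- Let f : ℕ^d → ℕ be any d-tupling function. Then f has diagonal shells if and only if for all points (x₁,...,x_d) ∈ ℕ^d, C(w+d−1, d) ≤ f(x₁,...,x_d) < C(w+d, d), where w = x₁ + x₂ + ⋯ + x_d and C denotes the binomial coefficient. -/
open Finset

/-- The finset of `d`-tuples of naturals with sum at most `w`. -/
private def shellSet (d w : ℕ) : Finset (Fin d → ℕ) :=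
  (Fintype.piFinset fun _ => Finset.range (w + 1)).filter (fun x => ∑ i, x i ≤ w)

private lemma mem_shellSet {d w : ℕ} {x : Fin d → ℕ} :
    x ∈ shellSet d w ↔ ∑ i, x i ≤ w := by
  simp only [shellSet, Finset.mem_filter, Fintype.mem_piFinset, Finset.mem_range]
  constructor
  · rintro ⟨_, h⟩; exact h
  · intro h
    exact ⟨fun i => lt_of_le_of_lt
      (Finset.single_le_sum (f := x) (fun _ _ => Nat.zero_le _) (mem_univ i))
      (Nat.lt_succ_of_le h), h⟩

private lemma card_shellSet : ∀ d w : ℕ, (shellSet d w).card = (w + d).choose d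
  | 0, w => by
    have : shellSet 0 w = Finset.univ := by
      ext x
      simp only [Finset.mem_univ, iff_true, mem_shellSet]
      simp
    rw [this]
    simp
  | d + 1, w => by
    have hS : shellSet (d + 1) w =
        (Finset.range (w + 1)).biUnion
          (fun j => (shellSet d (w - j)).image (fun y : Fin d → ℕ => (Fin.cons j y : Fin (d + 1) → ℕ))) := by
      ext x
      simp only [mem_shellSet, Finset.mem_biUnion, Finset.mem_range, Finset.mem_image]
      constructor
      · intro hx
        have h0 : x 0 ≤ ∑ i, x i := Finset.single_le_sum (f := x)
          (fun _ _ => Nat.zero_le _) (mem_univ 0)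
        refine ⟨x 0, by omega, Fin.tail x, ?_, Fin.cons_self_tail x⟩
        have hsum : ∑ i, x i = x 0 + ∑ i : Fin d, Fin.tail x i := by
          rw [Fin.sum_univ_succ]; rfl
        omega
      · rintro ⟨j, hj, y, hy, rfl⟩
        have hsum : ∑ i, (Fin.cons j y : Fin (d + 1) → ℕ) i = j + ∑ i : Fin d, y i := by
          rw [Fin.sum_univ_succ]; rfl
        omega
    have hdisj : ∀ a ∈ Finset.range (w + 1), ∀ b ∈ Finset.range (w + 1), a ≠ b →
        Disjoint ((shellSet d (w - a)).image (fun y : Fin d → ℕ => (Fin.cons a y : Fin (d + 1) → ℕ)))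
          ((shellSet d (w - b)).image (fun y : Fin d → ℕ => (Fin.cons b y : Fin (d + 1) → ℕ))) := by
      intro a _ b _ hab
      simp only [Finset.disjoint_left, Finset.mem_image]
      rintro x ⟨y, _, rfl⟩ ⟨z, _, hz⟩
      have h0 := congrFun hz 0
      simp only [Fin.cons_zero] at h0
      exact hab h0.symm
    rw [hS, Finset.card_biUnion hdisj]
    have : ∀ j ∈ Finset.range (w + 1),
          ((shellSet d (w - j)).image (fun y : Fin d → ℕ => (Fin.cons j y : Fin (d + 1) → ℕ))).card
            = (w - j + d).choose d := by
      intro j _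
      rw [Finset.card_image_of_injective _ (Fin.cons_right_injective (α := fun _ : Fin (d+1) => ℕ) j),
        card_shellSet]
    rw [Finset.sum_congr rfl this]
    have hre := Finset.sum_range_reflect (fun i => (i + d).choose d) (w + 1)
    simp only [Nat.add_sub_cancel] at hre
    rw [hre, Nat.sum_range_add_choose]
    rfl

/-- A `d`-tupling function `f : ℕ^d → ℕ` has diagonal shells (i.e.
`σ(x) = x₁ + ⋯ + x_d` is a shell numbering for `f`) if and only if
`C(w+d−1, d) ≤ f(x) < C(w+d, d)` for all `x`, where `w = x₁ + ⋯ + x_d`. -/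
theorem diagonal_shells_iff (d : ℕ) (hd : 0 < d)
    (f : (Fin d → ℕ) → ℕ) (hf : Function.Bijective f) :
    (∀ x y : Fin d → ℕ, (∑ i, x i) < (∑ i, y i) → f x < f y) ↔
      ∀ x : Fin d → ℕ,
        ((∑ i, x i) + d - 1).choose d ≤ f x ∧ f x < ((∑ i, x i) + d).choose d := by
  constructor
  · intro hmono x
    set w := ∑ i, x i with hw
    constructor
    · -- lower bound
      rcases Nat.eq_zero_or_pos w with h0 | hpos
      · rw [h0]
        rw [Nat.choose_eq_zero_of_lt (by omega)]
        exact Nat.zero_le _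
      · obtain ⟨v, hv⟩ : ∃ v, w = v + 1 := ⟨w - 1, by omega⟩
        have hsub : (shellSet d v).image f ⊆ Finset.range (f x) := by
          intro n hn
          rw [Finset.mem_image] at hn
          obtain ⟨z, hz, rfl⟩ := hn
          rw [mem_shellSet] at hz
          rw [Finset.mem_range]
          exact hmono z x (by omega)
        have := Finset.card_le_card hsub
        rw [Finset.card_image_of_injective _ hf.1, card_shellSet,
          Finset.card_range] at this
        rw [hv, show v + 1 + d - 1 = v + d from by omega]
        exact this
    · -- upper bound
      have hsub : Finset.range (f x + 1) ⊆ (shellSet d w).image f := by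
        intro n hn
        rw [Finset.mem_range] at hn
        obtain ⟨z, rfl⟩ := hf.2 n
        rw [Finset.mem_image]
        refine ⟨z, ?_, rfl⟩
        rw [mem_shellSet]
        by_contra hc
        push_neg at hc
        exact absurd (hmono x z (by omega)) (by omega)
      have := Finset.card_le_card hsub
      rw [Finset.card_image_of_injective _ hf.1, card_shellSet,
        Finset.card_range] at this
      omega
  · intro h x y hxy
    have h1 := (h x).2
    have h2 := (h y).1
    have h3 : ((∑ i, x i) + d).choose d ≤ ((∑ i, y i) + d - 1).choose d :=
      Nat.choose_le_choose d (by omega)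
    omega
end

section
/- Let f : ℕ^d → ℕ be any d-tupling function. Then f has cubic shells if and only if for all points (x₁,...,x_d) ∈ ℕ^d, m^d ≤ f(x₁,...,x_d) < (m+1)^d, where m = max(x₁,...,x_d). -/
/-- A `d`-tupling function `f : ℕ^d → ℕ` has cubic shells (i.e.
`σ(x) = max(x₁,...,x_d)` is a shell numbering for `f`) if and only if
`m^d ≤ f(x) < (m+1)^d` for all `x`, where `m = max(x₁,...,x_d)`. -/
theorem cubic_shells_iff (d : ℕ) (hd : 0 < d)
    (f : (Fin d → ℕ) → ℕ) (hf : Function.Bijective f) :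
    (∀ x y : Fin d → ℕ, Finset.univ.sup x < Finset.univ.sup y → f x < f y) ↔
      ∀ x : Fin d → ℕ,
        (Finset.univ.sup x) ^ d ≤ f x ∧ f x < (Finset.univ.sup x + 1) ^ d := by
  constructor
  · intro h x
    set m := Finset.univ.sup x with hm
    have cardS : ∀ k : ℕ,
        (Fintype.piFinset (fun _ : Fin d => Finset.range k)).card = k ^ d := by
      intro k
      simp [Fintype.card_piFinset]
    constructor
    · -- lower bound
      have hle : (Fintype.piFinset (fun _ : Fin d => Finset.range m)).card
          ≤ (Finset.range (f x)).card := by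
        apply Finset.card_le_card_of_injOn f
        · intro y hy
          rw [Finset.mem_coe, Fintype.mem_piFinset] at hy
          simp only [Finset.mem_coe, Finset.mem_range] at hy ⊢
          apply h
          rw [← hm]
          have hmpos : 0 < m := by
            obtain ⟨i⟩ := Fin.pos_iff_nonempty.mp hd
            exact lt_of_le_of_lt (Nat.zero_le _) (hy i)
          exact Finset.sup_lt_iff hmpos |>.mpr (fun i _ => hy i)
        · exact hf.1.injOn
      rwa [cardS, Finset.card_range] at hle
    · -- upper bound
      set e := Equiv.ofBijective f hf with he
      have hle : (Finset.range (f x + 1)).card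
          ≤ (Fintype.piFinset (fun _ : Fin d => Finset.range (m + 1))).card := by
        apply Finset.card_le_card_of_injOn e.symm
        · intro n hn
          rw [Finset.mem_coe, Finset.mem_range, Nat.lt_succ_iff] at hn
          rw [Finset.mem_coe, Fintype.mem_piFinset]
          intro i
          rw [Finset.mem_range, Nat.lt_succ_iff]
          by_contra hcon
          push_neg at hcon
          have hsup : m < Finset.univ.sup (e.symm n) :=
            lt_of_lt_of_le hcon (Finset.le_sup (Finset.mem_univ i))
          have := h x (e.symm n) hsup
          have hfn : f (e.symm n) = n := e.apply_symm_apply n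
          omega
        · exact e.symm.injective.injOn
      rwa [cardS, Finset.card_range] at hle
  · intro h x y hxy
    obtain ⟨_, hx2⟩ := h x
    obtain ⟨hy1, _⟩ := h y
    calc f x < (Finset.univ.sup x + 1) ^ d := hx2
      _ ≤ (Finset.univ.sup y) ^ d := Nat.pow_le_pow_left hxy _
      _ ≤ f y := hy1
end

section
/- If a d-tupling function f : ℕ^d → ℕ has diagonal shells or has cubic shells, then f is max-dominating, i.e. max(x₁,...,x_d) ≤ f(x₁,...,x_d) for all points of ℕ^d. -/
/-- If a `d`-tupling function `f : ℕ^d → ℕ` has diagonal shells or cubic shells,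
then `f` is max-dominating: `max(x₁,...,x_d) ≤ f(x₁,...,x_d)` for all points. -/
theorem shells_max_dominating (d : ℕ) (hd : 0 < d)
    (f : (Fin d → ℕ) → ℕ) (hf : Function.Bijective f)
    (h : (∀ x y : Fin d → ℕ, (∑ i, x i) < (∑ i, y i) → f x < f y) ∨
         (∀ x y : Fin d → ℕ, Finset.univ.sup x < Finset.univ.sup y → f x < f y)) :
    ∀ x : Fin d → ℕ, Finset.univ.sup x ≤ f x := by
  have key : ∀ (σ : (Fin d → ℕ) → ℕ) (p : ℕ → Fin d → ℕ),
      (∀ k, σ (p k) = k) →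
      (∀ x y, σ x < σ y → f x < f y) →
      ∀ x, σ x ≤ f x := by
    intro σ p hp hmono x
    have hlt : ∀ k : Fin (σ x), f (p k) < f x := fun k =>
      hmono _ _ (by rw [hp]; exact k.2)
    let g : Fin (σ x) → Fin (f x) := fun k => ⟨f (p k), hlt k⟩
    have hg : Function.Injective g := by
      intro a b hab
      have h1 : f (p a) = f (p b) := congrArg Fin.val hab
      have h2 : p (a : ℕ) = p b := hf.1 h1
      have h3 := congrArg σ h2
      rw [hp, hp] at h3
      exact Fin.ext h3
    simpa using Fintype.card_le_of_injective g hg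
  intro x
  rcases h with h | h
  · have h1 : (∑ i, x i) ≤ f x := by
      refine key (fun y => ∑ i, y i) (fun k i => if i = ⟨0, hd⟩ then k else 0) ?_ h x
      intro k
      simp
    calc Finset.univ.sup x ≤ ∑ i, x i := by
          refine Finset.sup_le fun i _ => ?_
          exact Finset.single_le_sum (fun j _ => Nat.zero_le _) (Finset.mem_univ i)
      _ ≤ f x := h1
  · refine key (fun y => Finset.univ.sup y) (fun k _ => k) ?_ h x
    intro k
    have : (Finset.univ : Finset (Fin d)).Nonempty := ⟨⟨0, hd⟩, Finset.mem_univ _⟩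
    simpa using Finset.sup_const this k
end

section
/- For every non-negative integer z, let m = ⌊√z⌋. If z − m² < m then r₂(z − m², m) = z; otherwise z ≤ m² + 2m and r₂(m, m² + 2m − z) = z. In other words, the inverse of the Rosenberg-Strong pairing function is r₂⁻¹(z) = (z − m², m) if z − m² < m, and (m, m² + 2m − z) otherwise. -/
/-- The Rosenberg-Strong pairing function `r₂(x,y) = M² + M + x − y`, `M = max(x,y)`. -/
def rosenbergStrong2 (x y : ℕ) : ℕ := (max x y) ^ 2 + max x y + x - y

/-- Inverse of the Rosenberg-Strong pairing function: with `m = ⌊√z⌋`,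
if `z − m² < m` then `r₂(z − m², m) = z`; otherwise `z ≤ m² + 2m` and
`r₂(m, m² + 2m − z) = z`. -/
theorem rosenbergStrong2_inverse (z : ℕ) :
    (z - (Nat.sqrt z) ^ 2 < Nat.sqrt z →
      rosenbergStrong2 (z - (Nat.sqrt z) ^ 2) (Nat.sqrt z) = z) ∧
    (¬ z - (Nat.sqrt z) ^ 2 < Nat.sqrt z →
      z ≤ (Nat.sqrt z) ^ 2 + 2 * Nat.sqrt z ∧
        rosenbergStrong2 (Nat.sqrt z) ((Nat.sqrt z) ^ 2 + 2 * Nat.sqrt z - z) = z) := by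
  set m := Nat.sqrt z with hm
  have h1 : m ^ 2 ≤ z := by rw [pow_two]; exact Nat.sqrt_le z
  have h2 : z ≤ m ^ 2 + 2 * m := by
    have := Nat.lt_succ_sqrt z
    nlinarith [this]
  constructor
  · intro h
    have hx : z - m ^ 2 ≤ m := h.le
    have hmax : max (z - m ^ 2) m = m := max_eq_right hx
    unfold rosenbergStrong2
    rw [hmax]
    omega
  · intro h
    refine ⟨h2, ?_⟩
    have hle : m ^ 2 + 2 * m - z ≤ m := by omega
    unfold rosenbergStrong2
    rw [max_eq_left hle]
    omega
end

section
/- Let f be any max-dominating pairing function for the non-negative integers. Then there exists a unique function φ : ℕ → T such that φ(0) = o and φ(f(x,y) + 1) = τ(φ(x), φ(y)) for all x, y ∈ ℕ, and this φ is a bijection from ℕ to T (an enumeration of the full binary trees). -/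
/-- The inductive type of full binary trees: `o` is the one-vertex tree, and
`τ a b` is the tree with left subtree `a` and right subtree `b`. -/
inductive FullBinaryTree : Type
  | o : FullBinaryTree
  | τ : FullBinaryTree → FullBinaryTree → FullBinaryTree

private lemma inv_fst_le (f : ℕ × ℕ → ℕ) (hf : Function.Bijective f)
    (hmax : ∀ x y : ℕ, max x y ≤ f (x, y)) (n : ℕ) :
    (Function.invFun f n).1 ≤ n ∧ (Function.invFun f n).2 ≤ n := by
  have h : f (Function.invFun f n) = n := Function.rightInverse_invFun hf.2 n
  have := hmax (Function.invFun f n).1 (Function.invFun f n).2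
  rw [Prod.mk.eta, h] at this
  exact ⟨le_trans (le_max_left _ _) this, le_trans (le_max_right _ _) this⟩

private noncomputable def phiAux (f : ℕ × ℕ → ℕ) (hf : Function.Bijective f)
    (hmax : ∀ x y : ℕ, max x y ≤ f (x, y)) : ℕ → FullBinaryTree
  | 0 => FullBinaryTree.o
  | n + 1 =>
    FullBinaryTree.τ (phiAux f hf hmax (Function.invFun f n).1)
      (phiAux f hf hmax (Function.invFun f n).2)
termination_by n => n
decreasing_by
  · exact Nat.lt_succ_of_le (inv_fst_le f hf hmax n).1
  · exact Nat.lt_succ_of_le (inv_fst_le f hf hmax n).2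

private lemma phiAux_spec (f : ℕ × ℕ → ℕ) (hf : Function.Bijective f)
    (hmax : ∀ x y : ℕ, max x y ≤ f (x, y)) :
    phiAux f hf hmax 0 = FullBinaryTree.o ∧
      ∀ x y : ℕ, phiAux f hf hmax (f (x, y) + 1) =
        FullBinaryTree.τ (phiAux f hf hmax x) (phiAux f hf hmax y) := by
  refine ⟨by rw [phiAux], fun x y => ?_⟩
  have h : Function.invFun f (f (x, y)) = (x, y) := Function.leftInverse_invFun hf.1 _
  conv_lhs => rw [phiAux, h]

/-- For any max-dominating pairing function `f`, there is a unique `φ : ℕ → T` with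
`φ(0) = o` and `φ(f(x,y)+1) = τ(φ(x), φ(y))`, and this `φ` is a bijection from ℕ
to the full binary trees. -/
theorem tree_enumeration (f : ℕ × ℕ → ℕ) (hf : Function.Bijective f)
    (hmax : ∀ x y : ℕ, max x y ≤ f (x, y)) :
    (∃! φ : ℕ → FullBinaryTree,
        φ 0 = FullBinaryTree.o ∧
          ∀ x y : ℕ, φ (f (x, y) + 1) = FullBinaryTree.τ (φ x) (φ y)) ∧
    (∀ φ : ℕ → FullBinaryTree,
        (φ 0 = FullBinaryTree.o ∧
          ∀ x y : ℕ, φ (f (x, y) + 1) = FullBinaryTree.τ (φ x) (φ y)) →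
        Function.Bijective φ) := by
  have hinv : ∀ n, f (Function.invFun f n) = n := Function.rightInverse_invFun hf.2
  -- uniqueness: any two solutions agree
  have huniq : ∀ ψ φ : ℕ → FullBinaryTree,
      (ψ 0 = FullBinaryTree.o ∧
        ∀ x y : ℕ, ψ (f (x, y) + 1) = FullBinaryTree.τ (ψ x) (ψ y)) →
      (φ 0 = FullBinaryTree.o ∧
        ∀ x y : ℕ, φ (f (x, y) + 1) = FullBinaryTree.τ (φ x) (φ y)) →
      ψ = φ := by
    intro ψ φ hψ hφ
    funext n
    induction n using Nat.strong_induction_on with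
    | _ n ih =>
      match n with
      | 0 => rw [hψ.1, hφ.1]
      | n + 1 =>
        have h1 := (inv_fst_le f hf hmax n).1
        have h2 := (inv_fst_le f hf hmax n).2
        have e : n + 1 = f ((Function.invFun f n).1, (Function.invFun f n).2) + 1 := by
          rw [Prod.mk.eta, hinv]
        rw [e, hψ.2, hφ.2, ih _ (Nat.lt_succ_of_le h1), ih _ (Nat.lt_succ_of_le h2)]
  constructor
  · exact ⟨phiAux f hf hmax, phiAux_spec f hf hmax,
      fun φ hφ => (huniq φ (phiAux f hf hmax) hφ (phiAux_spec f hf hmax))⟩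
  · intro φ hφ
    constructor
    · -- injective
      have key : ∀ m, ∀ n, φ m = φ n → m = n := by
        intro m
        induction m using Nat.strong_induction_on with
        | _ m ih =>
          intro n h
          match m, n with
          | 0, 0 => rfl
          | 0, n + 1 =>
            exfalso
            have e : n + 1 = f ((Function.invFun f n).1, (Function.invFun f n).2) + 1 := by
              rw [Prod.mk.eta, hinv]
            rw [hφ.1, e, hφ.2] at h
            exact FullBinaryTree.noConfusion h
          | m + 1, 0 =>
            exfalso
            have e : m + 1 = f ((Function.invFun f m).1, (Function.invFun f m).2) + 1 := by
              rw [Prod.mk.eta, hinv]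
            rw [hφ.1, e, hφ.2] at h
            exact FullBinaryTree.noConfusion h
          | m + 1, n + 1 =>
            have em : m + 1 = f ((Function.invFun f m).1, (Function.invFun f m).2) + 1 := by
              rw [Prod.mk.eta, hinv]
            have en : n + 1 = f ((Function.invFun f n).1, (Function.invFun f n).2) + 1 := by
              rw [Prod.mk.eta, hinv]
            rw [em, en, hφ.2, hφ.2] at h
            injection h with h1 h2
            have hm1 := (inv_fst_le f hf hmax m).1
            have hm2 := (inv_fst_le f hf hmax m).2
            have e1 := ih _ (Nat.lt_succ_of_le hm1) _ h1
            have e2 := ih _ (Nat.lt_succ_of_le hm2) _ h2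
            have : Function.invFun f m = Function.invFun f n := Prod.ext e1 e2
            have : m = n := by
              have := congrArg f this
              rwa [hinv, hinv] at this
            rw [this]
      exact fun a b => key a b
    · -- surjective
      intro t
      induction t with
      | o => exact ⟨0, hφ.1⟩
      | τ a b iha ihb =>
        obtain ⟨x, hx⟩ := iha
        obtain ⟨y, hy⟩ := ihb
        exact ⟨f (x, y) + 1, by rw [hφ.2, hx, hy]⟩
end

section
/- Let f : ℕ² → ℕ be any pairing function with cubic shells, and let φ : ℕ → T be the function satisfying φ(0) = o and φ(f(x,y) + 1) = τ(φ(x), φ(y)) for all x, y ∈ ℕ. Then the sequence n ↦ H(φ(n)) is non-decreasing: for all i, j ∈ ℕ, i ≥ j implies H(φ(i)) ≥ H(φ(j)). -/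
/-- The height of a full binary tree: `H(o) = 0`, `H(τ(a,b)) = 1 + max(H(a), H(b))`. -/
def height : FullBinaryTree → ℕ
  | .o => 0
  | .τ a b => 1 + max (height a) (height b)

/-- If `f` is a pairing function with cubic shells and `φ` is the enumeration of
full binary trees built from `f` (so `φ(0) = o` and `φ(f(x,y)+1) = τ(φ(x), φ(y))`),
then the sequence of heights `H(φ(n))` is non-decreasing. -/
theorem tree_heights_nondecreasing (f : ℕ × ℕ → ℕ) (hf : Function.Bijective f)
    (hcubic : ∀ p q : ℕ × ℕ, max p.1 p.2 < max q.1 q.2 → f p < f q)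
    (φ : ℕ → FullBinaryTree)
    (hφ0 : φ 0 = FullBinaryTree.o)
    (hφ : ∀ x y : ℕ, φ (f (x, y) + 1) = FullBinaryTree.τ (φ x) (φ y)) :
    ∀ i j : ℕ, j ≤ i → height (φ j) ≤ height (φ i) := by
  have hdom : ∀ p : ℕ × ℕ, max p.1 p.2 ≤ f p := by
    intro p
    set m := max p.1 p.2 with hm
    have hinj : Set.InjOn (fun i : ℕ => f (i, i)) (Finset.range m) := by
      intro a _ b _ hab
      have := hf.1 hab
      simpa using congrArg Prod.fst this
    have hsub : Finset.image (fun i : ℕ => f (i, i)) (Finset.range m)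
        ⊆ Finset.range (f p) := by
      intro v hv
      simp only [Finset.mem_image, Finset.mem_range] at hv ⊢
      obtain ⟨i, hi, rfl⟩ := hv
      exact hcubic (i, i) p (by simp only; omega)
    have := Finset.card_le_card hsub
    rwa [Finset.card_image_of_injOn hinj, Finset.card_range, Finset.card_range] at this
  intro i
  induction i using Nat.strong_induction_on with
  | _ n ih =>
    intro j hj
    rcases Nat.eq_zero_or_pos j with rfl | hjpos
    · rw [hφ0]; simp [height]
    rcases Nat.eq_zero_or_pos n with rfl | hnpos
    · omega
    obtain ⟨⟨a, b⟩, hab⟩ := hf.2 (j - 1)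
    obtain ⟨⟨x, y⟩, hxy⟩ := hf.2 (n - 1)
    have hj' : j = f (a, b) + 1 := by omega
    have hn' : n = f (x, y) + 1 := by omega
    have hfle : f (a, b) ≤ f (x, y) := by omega
    have hmax : max a b ≤ max x y := by
      by_contra h
      push_neg at h
      have := hcubic (x, y) (a, b) (by simpa using h)
      omega
    have hxyn : max x y < n := by
      have := hdom (x, y)
      simp only at this
      omega
    have ha : height (φ a) ≤ height (φ (max x y)) :=
      ih (max x y) hxyn a (le_trans (le_max_left a b) hmax)
    have hb : height (φ b) ≤ height (φ (max x y)) :=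
      ih (max x y) hxyn b (le_trans (le_max_right a b) hmax)
    have hmid : height (φ (max x y)) ≤ max (height (φ x)) (height (φ y)) := by
      rcases max_choice x y with h | h <;> rw [h] <;> simp
    rw [hj', hn', hφ a b, hφ x y]
    simp only [height]
    exact Nat.add_le_add_left (le_trans (max_le ha hb) hmid) 1
end

section
/- Let f be any max-dominating pairing function for the non-negative integers. Then there exists a unique function ξ : ℕ → List ℕ such that ξ(0) = [] and, for all x, y ∈ ℕ, ξ(f(x,y) + 1) = [y] if x = 0 and ξ(f(x,y) + 1) = ξ(x) ++ [y] otherwise; and this ξ is a bijection from ℕ to List ℕ (an enumeration of all finite-length sequences of non-negative integers). -/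
noncomputable def xiAux (g : ℕ → ℕ × ℕ) (hg : ∀ n, (g n).1 ≤ n) : ℕ → List ℕ
  | 0 => []
  | (n+1) =>
    if (g n).1 = 0 then [(g n).2] else xiAux g hg (g n).1 ++ [(g n).2]
decreasing_by exact Nat.lt_succ_of_le (hg n)

lemma xiAux_zero (g : ℕ → ℕ × ℕ) (hg : ∀ n, (g n).1 ≤ n) : xiAux g hg 0 = [] := by
  simp [xiAux]

lemma xiAux_succ (g : ℕ → ℕ × ℕ) (hg : ∀ n, (g n).1 ≤ n) (n : ℕ) :
    xiAux g hg (n+1) = if (g n).1 = 0 then [(g n).2] else xiAux g hg (g n).1 ++ [(g n).2] := by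
  rw [xiAux]

/-- For any max-dominating pairing function `f`, there is a unique `ξ : ℕ → List ℕ`
with `ξ(0) = []`, `ξ(f(x,y)+1) = [y]` if `x = 0`, and `ξ(f(x,y)+1) = ξ(x) ++ [y]`
otherwise; and this `ξ` is a bijection from ℕ to the finite sequences of
non-negative integers. -/
theorem sequence_enumeration (f : ℕ × ℕ → ℕ) (hf : Function.Bijective f)
    (hmax : ∀ x y : ℕ, max x y ≤ f (x, y)) :
    (∃! ξ : ℕ → List ℕ,
        ξ 0 = [] ∧
          ∀ x y : ℕ, ξ (f (x, y) + 1) = if x = 0 then [y] else ξ x ++ [y]) ∧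
    (∀ ξ : ℕ → List ℕ,
        (ξ 0 = [] ∧
          ∀ x y : ℕ, ξ (f (x, y) + 1) = if x = 0 then [y] else ξ x ++ [y]) →
        Function.Bijective ξ) := by
  set g : ℕ → ℕ × ℕ := Function.invFun f with hgdef
  have hfg : ∀ n, f (g n) = n := fun n => Function.rightInverse_invFun hf.2 n
  have hgf : ∀ p, g (f p) = p := fun p => Function.leftInverse_invFun hf.1 p
  have hg : ∀ n, (g n).1 ≤ n := by
    intro n
    have h := hmax (g n).1 (g n).2
    rw [Prod.mk.eta, hfg n] at h
    exact le_trans (le_max_left _ _) h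
  constructor
  · refine ⟨xiAux g hg, ⟨xiAux_zero g hg, ?_⟩, ?_⟩
    · intro x y
      have : g (f (x, y)) = (x, y) := hgf (x, y)
      rw [xiAux_succ, this]
    · intro ξ ⟨h0, hrec⟩
      funext n
      induction n using Nat.strong_induction_on with
      | _ n ih =>
        match n with
        | 0 => rw [h0, xiAux_zero]
        | n + 1 =>
          have hn : f ((g n).1, (g n).2) = n := by rw [Prod.mk.eta, hfg n]
          have h1 := hrec (g n).1 (g n).2
          rw [hn] at h1
          rw [h1, xiAux_succ]
          by_cases hx : (g n).1 = 0
          · simp [hx]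
          · simp only [if_neg hx]
            rw [ih (g n).1 (Nat.lt_succ_of_le (hg n))]
  · rintro ξ ⟨h0, hrec⟩
    -- simplified recursion: ξ (f (x,y) + 1) = ξ x ++ [y]
    have hrec' : ∀ x y, ξ (f (x, y) + 1) = ξ x ++ [y] := by
      intro x y
      rw [hrec x y]
      by_cases hx : x = 0
      · simp [hx, h0]
      · simp [hx]
    constructor
    · intro a
      induction a using Nat.strong_induction_on with
      | _ a ih =>
        intro b hab
        match a, b with
        | 0, 0 => rfl
        | 0, b + 1 =>
          have hb : f ((g b).1, (g b).2) = b := by rw [Prod.mk.eta, hfg b]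
          have := hrec' (g b).1 (g b).2
          rw [hb, ← hab, h0] at this
          simp at this
        | a + 1, 0 =>
          have ha : f ((g a).1, (g a).2) = a := by rw [Prod.mk.eta, hfg a]
          have := hrec' (g a).1 (g a).2
          rw [ha, hab, h0] at this
          simp at this
        | a + 1, b + 1 =>
          have ha : f ((g a).1, (g a).2) = a := by rw [Prod.mk.eta, hfg a]
          have hb : f ((g b).1, (g b).2) = b := by rw [Prod.mk.eta, hfg b]
          have h1 := hrec' (g a).1 (g a).2
          have h2 := hrec' (g b).1 (g b).2
          rw [ha] at h1; rw [hb] at h2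
          rw [h1, h2] at hab
          obtain ⟨hl, hr⟩ := List.append_inj' hab rfl
          have hx : (g a).1 = (g b).1 := ih (g a).1 (Nat.lt_succ_of_le (hg a)) hl
          have hy : (g a).2 = (g b).2 := by simpa using hr
          have : a = b := by
            rw [← ha, ← hb, hx, hy]
          rw [this]
    · intro l
      induction l using List.reverseRecOn with
      | nil => exact ⟨0, h0⟩
      | append_singleton l y ih =>
        obtain ⟨x, hx⟩ := ih
        exact ⟨f (x, y) + 1, by rw [hrec' x y, hx]⟩
end

section
/- Let f : ℕ^d → ℕ be any d-tupling function with cubic shells and let n be a non-negative integer. If each of the non-negative integers x₁, x₂, ..., x_d is strictly less than 2^n (i.e. each has a binary representation with n or fewer bits), then f(x₁,...,x_d) < 2^{n·d} (i.e. f(x₁,...,x_d) has a binary representation with n·d or fewer bits). -/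
/-- If `f : ℕ^d → ℕ` is a `d`-tupling function with cubic shells and each coordinate
`xᵢ` is strictly less than `2^n` (i.e. has `n` or fewer bits), then
`f(x₁,...,x_d) < 2^(n·d)` (i.e. has `n·d` or fewer bits). -/
theorem cubic_shells_bits (d n : ℕ) (hd : 0 < d)
    (f : (Fin d → ℕ) → ℕ) (hf : Function.Bijective f)
    (hcubic : ∀ x y : Fin d → ℕ, Finset.univ.sup x < Finset.univ.sup y → f x < f y)
    (x : Fin d → ℕ) (hx : ∀ i, x i < 2 ^ n) :
    f x < 2 ^ (n * d) := by
  set g := Function.surjInv hf.2 with hg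
  have hfg : ∀ k, f (g k) = k := fun k => Function.surjInv_eq hf.2 k
  have hsupx : Finset.univ.sup x < 2 ^ n := by
    refine Finset.sup_lt_iff (by positivity) |>.2 fun i _ => hx i
  have key : ∀ k ∈ Finset.range (f x + 1),
      g k ∈ Fintype.piFinset (fun _ : Fin d => Finset.range (2 ^ n)) := by
    intro k hk
    simp only [Finset.mem_range] at hk
    simp only [Fintype.mem_piFinset, Finset.mem_range]
    intro i
    by_contra h
    push_neg at h
    have hsup : Finset.univ.sup x < Finset.univ.sup (g k) :=
      lt_of_lt_of_le hsupx (le_trans h (Finset.le_sup (Finset.mem_univ i)))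
    have := hcubic x (g k) hsup
    rw [hfg] at this
    omega
  have hinj : Set.InjOn g (Finset.range (f x + 1)) := by
    intro a _ b _ hab
    have := congrArg f hab
    rwa [hfg, hfg] at this
  have hcard := Finset.card_le_card_of_injOn g key hinj
  simp only [Finset.card_range, Fintype.card_piFinset, Finset.card_range,
    Finset.prod_const, Finset.card_univ, Fintype.card_fin] at hcard
  calc f x < f x + 1 := Nat.lt_succ_self _
    _ ≤ (2 ^ n) ^ d := hcard
    _ = 2 ^ (n * d) := by rw [← pow_mul]
end

section
/- For every positive integer d and every point (x₁,...,x_d) ∈ ℕ^d, the Rosenberg-Strong d-tupling function satisfies m^d ≤ r_d(x₁,...,x_d) < (m+1)^d, where m = max(x₁,...,x_d). -/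
/-- The Rosenberg-Strong `d`-tupling function, defined recursively by
`r₁(x₁) = x₁` and, for `d > 1`,
`r_d(x₁,...,x_d) = r_{d−1}(x₁,...,x_{d−1}) + m^d + (m − x_d)·((m+1)^{d−1} − m^{d−1})`,
where `m = max(x₁,...,x_d)`. -/
def rosenbergStrong : (d : ℕ) → (Fin d → ℕ) → ℕ
  | 0, _ => 0
  | 1, x => x 0
  | d + 2, x =>
      rosenbergStrong (d + 1) (fun i => x i.castSucc) +
        (Finset.univ.sup x) ^ (d + 2) +
        (Finset.univ.sup x - x (Fin.last (d + 1))) *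
          ((Finset.univ.sup x + 1) ^ (d + 1) - (Finset.univ.sup x) ^ (d + 1))

lemma rs_aux : ∀ (d : ℕ) (x : Fin (d + 1) → ℕ),
    (Finset.univ.sup x) ^ (d + 1) ≤ rosenbergStrong (d + 1) x ∧
      rosenbergStrong (d + 1) x < (Finset.univ.sup x + 1) ^ (d + 1) := by
  intro d
  induction d with
  | zero =>
      intro x
      have h : Finset.univ.sup x = x 0 := by
        apply le_antisymm
        · exact Finset.sup_le fun i _ => by fin_cases i; exact le_rfl
        · exact Finset.le_sup (Finset.mem_univ 0)
      simp [rosenbergStrong, h]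
  | succ d ih =>
      intro x
      obtain ⟨h1, h2⟩ := ih (fun i => x i.castSucc)
      set m := Finset.univ.sup x with hm
      set x' : Fin (d + 1) → ℕ := fun i => x i.castSucc with hx'
      set m' := Finset.univ.sup x' with hm'
      have hmm : m' ≤ m := by
        rw [hm', hm]
        exact Finset.sup_le fun i _ => Finset.le_sup (f := x) (Finset.mem_univ i.castSucc)
      have hBA : m ^ (d + 1) ≤ (m + 1) ^ (d + 1) := Nat.pow_le_pow_left (Nat.le_succ m) _
      have key : rosenbergStrong (d + 2) x =
          rosenbergStrong (d + 1) x' + m ^ (d + 2) +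
            (m - x (Fin.last (d + 1))) * ((m + 1) ^ (d + 1) - m ^ (d + 1)) := rfl
      have e0 : rosenbergStrong (d + 1 + 1) x = rosenbergStrong (d + 2) x := rfl
      have e24 : m ^ (d + 1 + 1) = m ^ (d + 2) := rfl
      have e35 : (m + 1) ^ (d + 1 + 1) = (m + 1) ^ (d + 2) := rfl
      have e2 : m ^ (d + 2) = m * m ^ (d + 1) := by rw [pow_succ]; ring
      have e3 : (m + 1) ^ (d + 2) = m * (m + 1) ^ (d + 1) + (m + 1) ^ (d + 1) := by
        rw [pow_succ]; ring
      have h3 : (m - x (Fin.last (d + 1))) * ((m + 1) ^ (d + 1) - m ^ (d + 1)) ≤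
          m * ((m + 1) ^ (d + 1) - m ^ (d + 1)) :=
        Nat.mul_le_mul_right _ (Nat.sub_le _ _)
      have h7 : m * ((m + 1) ^ (d + 1) - m ^ (d + 1)) + m * m ^ (d + 1) =
          m * (m + 1) ^ (d + 1) := by rw [← Nat.mul_add, Nat.sub_add_cancel hBA]
      have h4 : rosenbergStrong (d + 1) x' < (m + 1) ^ (d + 1) :=
        h2.trans_le (Nat.pow_le_pow_left (by omega) _)
      omega


/-- For every positive integer `d` and every point of ℕ^d,
`m^d ≤ r_d(x₁,...,x_d) < (m+1)^d`, where `m = max(x₁,...,x_d)`. -/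
theorem rosenbergStrong_shell_bounds (d : ℕ) (hd : 0 < d) (x : Fin d → ℕ) :
    (Finset.univ.sup x) ^ d ≤ rosenbergStrong d x ∧
      rosenbergStrong d x < (Finset.univ.sup x + 1) ^ d := by
  cases d with
  | zero => omega
  | succ n => exact rs_aux n x
end

section
/- For every positive integer d and every point (x₁,...,x_d) ∈ ℕ^d, max(x₁,...,x_d) = ⌊r_d(x₁,...,x_d)^{1/d}⌋, i.e. the maximum of the coordinates equals the integer d-th root of r_d(x₁,...,x_d). -/
/-- The integer `d`-th root `⌊z^{1/d}⌋`: for `d ≥ 1`, the greatest `m` with `m^d ≤ z`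
(equivalently, the unique `m` with `m^d ≤ z < (m+1)^d`). -/
def iroot (d z : ℕ) : ℕ := Nat.findGreatest (fun m => m ^ d ≤ z) z

lemma rs_bounds (d : ℕ) (x : Fin (d + 1) → ℕ) :
    (Finset.univ.sup x) ^ (d + 1) ≤ rosenbergStrong (d + 1) x ∧
      rosenbergStrong (d + 1) x < (Finset.univ.sup x + 1) ^ (d + 1) := by
  induction d with
  | zero =>
    have hsup : Finset.univ.sup x = x 0 := by
      apply le_antisymm
      · exact Finset.sup_le fun i _ => by fin_cases i; exact le_rfl
      · exact Finset.le_sup (Finset.mem_univ 0)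
    simp [rosenbergStrong, hsup]
  | succ d ih =>
    set x' : Fin (d + 1) → ℕ := fun i => x i.castSucc with hx'
    set m := Finset.univ.sup x with hm
    set m' := Finset.univ.sup x' with hm'
    have hmm : m' ≤ m :=
      Finset.sup_le fun i _ => Finset.le_sup (Finset.mem_univ i.castSucc)
    obtain ⟨h1, h2⟩ := ih x'
    have hr : rosenbergStrong (d + 2) x =
        rosenbergStrong (d + 1) x' + m ^ (d + 2) +
          (m - x (Fin.last (d + 1))) * ((m + 1) ^ (d + 1) - m ^ (d + 1)) := rfl
    set r' := rosenbergStrong (d + 1) x' with hr'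
    have hAB : m ^ (d + 1) ≤ (m + 1) ^ (d + 1) :=
      Nat.pow_le_pow_left (by omega) _
    have hrA : r' < (m + 1) ^ (d + 1) :=
      lt_of_lt_of_le h2 (Nat.pow_le_pow_left (by omega) _)
    constructor
    · calc m ^ (d + 2) ≤ r' + m ^ (d + 2) := Nat.le_add_left _ _
        _ ≤ _ := by rw [hr]; exact Nat.le_add_right _ _
    · rw [hr]
      have hxl : m - x (Fin.last (d + 1)) ≤ m := Nat.sub_le _ _
      have hP : (m - x (Fin.last (d + 1))) * ((m + 1) ^ (d + 1) - m ^ (d + 1)) ≤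
          m * ((m + 1) ^ (d + 1) - m ^ (d + 1)) := Nat.mul_le_mul_right _ hxl
      have key : m * m ^ (d + 1) + m * ((m + 1) ^ (d + 1) - m ^ (d + 1)) =
          m * (m + 1) ^ (d + 1) := by
        rw [← Nat.mul_add, Nat.add_sub_cancel' hAB]
      have hpow : m ^ (d + 2) = m * m ^ (d + 1) := by ring
      calc r' + m ^ (d + 2) +
            (m - x (Fin.last (d + 1))) * ((m + 1) ^ (d + 1) - m ^ (d + 1))
          ≤ r' + m ^ (d + 2) + m * ((m + 1) ^ (d + 1) - m ^ (d + 1)) :=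
            Nat.add_le_add_left hP _
        _ = r' + m * (m + 1) ^ (d + 1) := by rw [hpow, Nat.add_assoc, key]
        _ < (m + 1) ^ (d + 1) + m * (m + 1) ^ (d + 1) := Nat.add_lt_add_right hrA _
        _ = (m + 1) ^ (d + 1 + 1) := by ring

/-- For every positive integer `d` and every point of ℕ^d,
`max(x₁,...,x_d) = ⌊r_d(x₁,...,x_d)^{1/d}⌋`. -/
theorem rosenbergStrong_max_eq_iroot (d : ℕ) (hd : 0 < d) (x : Fin d → ℕ) :
    Finset.univ.sup x = iroot d (rosenbergStrong d x) := by
  obtain ⟨e, rfl⟩ : ∃ e, d = e + 1 := ⟨d - 1, by omega⟩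
  obtain ⟨h1, h2⟩ := rs_bounds e x
  set m := Finset.univ.sup x with hm
  set z := rosenbergStrong (e + 1) x with hz
  symm
  rw [iroot, Nat.findGreatest_eq_iff]
  refine ⟨le_trans (Nat.le_self_pow (by omega) m) h1, fun _ => h1, ?_⟩
  intro n hn _ hP
  exact absurd (lt_of_lt_of_le h2 (Nat.pow_le_pow_left hn _)) (not_lt.2 hP)
end

section
/- A d-tupling function f : ℕ^d → ℕ has cubic shells if and only if max(x₁,...,x_d) = ⌊f(x₁,...,x_d)^{1/d}⌋ for all points (x₁,...,x_d) ∈ ℕ^d. -/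
lemma iroot_pow_le {d z : ℕ} (hd : 0 < d) : (iroot d z) ^ d ≤ z := by
  rcases Nat.eq_zero_or_pos (iroot d z) with h | h
  · simp [h, Nat.zero_pow hd]
  · exact (Nat.findGreatest_eq_iff.mp (rfl : iroot d z = iroot d z)).2.1 h.ne'

lemma lt_iroot_succ_pow {d z : ℕ} (hd : 0 < d) : z < (iroot d z + 1) ^ d := by
  by_contra h
  push_neg at h
  have h1 : iroot d z + 1 ≤ z := le_trans (Nat.le_self_pow hd.ne' _) h
  have := Nat.le_findGreatest (P := fun m => m ^ d ≤ z) h1 h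
  simp only [iroot] at *
  omega

lemma iroot_eq_of {d z m : ℕ} (hd : 0 < d) (h1 : m ^ d ≤ z) (h2 : z < (m + 1) ^ d) :
    iroot d z = m := by
  have hle : m ≤ iroot d z := Nat.le_findGreatest (le_trans (Nat.le_self_pow hd.ne' _) h1) h1
  have := iroot_pow_le (z := z) hd
  by_contra hne
  have hlt : m < iroot d z := lt_of_le_of_ne hle (fun e => hne e.symm)
  have : (m + 1) ^ d ≤ (iroot d z) ^ d := Nat.pow_le_pow_left hlt _
  omega

/-- A `d`-tupling function `f : ℕ^d → ℕ` has cubic shells if and only if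
`max(x₁,...,x_d) = ⌊f(x₁,...,x_d)^{1/d}⌋` for all points of ℕ^d. -/
theorem cubic_shells_iff_max_eq_iroot (d : ℕ) (hd : 0 < d)
    (f : (Fin d → ℕ) → ℕ) (hf : Function.Bijective f) :
    (∀ x y : Fin d → ℕ, Finset.univ.sup x < Finset.univ.sup y → f x < f y) ↔
      ∀ x : Fin d → ℕ, Finset.univ.sup x = iroot d (f x) := by
  constructor
  · intro h x
    -- key: image of the box of side n+1 is range ((n+1)^d)
    have key : ∀ n : ℕ,
        (Fintype.piFinset (fun _ : Fin d => Finset.range (n + 1))).image f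
          = Finset.range ((n + 1) ^ d) := by
      intro n
      have hcard : ((Fintype.piFinset (fun _ : Fin d => Finset.range (n + 1))).image f).card
          = (n + 1) ^ d := by
        rw [Finset.card_image_of_injective _ hf.1, Fintype.card_piFinset]
        simp [Finset.prod_const]
      have hsub : Finset.range ((n + 1) ^ d) ⊆
          (Fintype.piFinset (fun _ : Fin d => Finset.range (n + 1))).image f := by
        intro k hk
        obtain ⟨y, rfl⟩ := hf.2 k
        rw [Finset.mem_range] at hk
        by_cases hy : y ∈ Fintype.piFinset (fun _ : Fin d => Finset.range (n + 1))
        · exact Finset.mem_image_of_mem f hy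
        · exfalso
          rw [Fintype.mem_piFinset] at hy
          push_neg at hy
          obtain ⟨i, hi⟩ := hy
          rw [Finset.mem_range] at hi
          push_neg at hi
          have hsupy : n < Finset.univ.sup y :=
            lt_of_lt_of_le hi (Finset.le_sup (Finset.mem_univ i))
          have himg : (Fintype.piFinset (fun _ : Fin d => Finset.range (n + 1))).image f
              ⊆ Finset.range (f y) := by
            intro z hz
            obtain ⟨w, hw, rfl⟩ := Finset.mem_image.mp hz
            rw [Fintype.mem_piFinset] at hw
            have hsupw : Finset.univ.sup w ≤ n :=
              Finset.sup_le fun i _ => Nat.lt_succ_iff.mp (Finset.mem_range.mp (hw i))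
            exact Finset.mem_range.mpr (h w y (lt_of_le_of_lt hsupw hsupy))
          have := Finset.card_le_card himg
          rw [hcard, Finset.card_range] at this
          omega
      exact (Finset.eq_of_subset_of_card_le hsub (by rw [hcard, Finset.card_range])).symm
    set m := Finset.univ.sup x with hm
    have hxmem : x ∈ Fintype.piFinset (fun _ : Fin d => Finset.range (m + 1)) := by
      rw [Fintype.mem_piFinset]
      intro i
      exact Finset.mem_range.mpr (Nat.lt_succ_of_le (Finset.le_sup (Finset.mem_univ i)))
    have hup : f x < (m + 1) ^ d := by
      have := Finset.mem_image_of_mem f hxmem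
      rw [key m] at this
      exact Finset.mem_range.mp this
    have hlow : m ^ d ≤ f x := by
      rcases Nat.eq_zero_or_pos m with hm0 | hm0
      · simp [hm0, Nat.zero_pow hd]
      · by_contra hlt
        push_neg at hlt
        have : f x ∈ Finset.range ((m - 1 + 1) ^ d) := by
          have hmm : m - 1 + 1 = m := by omega
          rw [hmm]
          exact Finset.mem_range.mpr hlt
        rw [← key (m - 1)] at this
        obtain ⟨z, hz, hzf⟩ := Finset.mem_image.mp this
        have hzx : z = x := hf.1 hzf
        subst hzx
        rw [Fintype.mem_piFinset] at hz
        have : m ≤ m - 1 :=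
          Finset.sup_le fun i _ => Nat.lt_succ_iff.mp (Finset.mem_range.mp (hz i))
        omega
    exact (iroot_eq_of hd hlow hup).symm
  · intro h x y hxy
    have hx : f x < (Finset.univ.sup x + 1) ^ d := by
      rw [h x]; exact lt_iroot_succ_pow hd
    have hy : (Finset.univ.sup y) ^ d ≤ f y := by
      rw [h y]; exact iroot_pow_le hd
    have : (Finset.univ.sup x + 1) ^ d ≤ (Finset.univ.sup y) ^ d :=
      Nat.pow_le_pow_left hxy _
    omega
end

section
/- For every positive integer d, the Rosenberg-Strong d-tupling function r_d : ℕ^d → ℕ is a bijection, and the recursively defined function F_d : ℕ → ℕ^d satisfies r_d(F_d(z)) = z and F_d(r_d(x)) = x for all z ∈ ℕ and x ∈ ℕ^d; that is, F_d is the inverse of r_d. -/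
/-- The recursively defined candidate inverse `F_d : ℕ → ℕ^d` of the Rosenberg-Strong
`d`-tupling function: `F₁(z) = z` and, for `d > 1`,
`F_d(z) = (F_{d−1}(z − m^d − (m − x_d)·((m+1)^{d−1} − m^{d−1})), x_d)`, where
`m = ⌊z^{1/d}⌋` and `x_d = m − ⌊max(0, z − m^d − m^{d−1}) / ((m+1)^{d−1} − m^{d−1})⌋`. -/
def rosenbergStrongInv : (d : ℕ) → ℕ → (Fin d → ℕ)
  | 0, _ => fun i => i.elim0
  | 1, z => fun _ => z
  | d + 2, z =>
      let m := iroot (d + 2) z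
      let xd := m - (z - m ^ (d + 2) - m ^ (d + 1)) / ((m + 1) ^ (d + 1) - m ^ (d + 1))
      Fin.snoc
        (rosenbergStrongInv (d + 1)
          (z - m ^ (d + 2) - (m - xd) * ((m + 1) ^ (d + 1) - m ^ (d + 1))))
        xd

/- auxiliary lemmas -/
lemma sup_snoc_eq (d : ℕ) (x : Fin (d+2) → ℕ) :
    Finset.univ.sup x = max (Finset.univ.sup (fun i : Fin (d+1) => x i.castSucc)) (x (Fin.last (d+1))) := by
  apply le_antisymm
  · apply Finset.sup_le
    intro i _
    induction i using Fin.lastCases with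
    | last => exact le_max_right _ _
    | cast j => exact le_trans (Finset.le_sup (f := fun i : Fin (d+1) => x i.castSucc) (Finset.mem_univ j)) (le_max_left _ _)
  · apply max_le
    · exact Finset.sup_le fun j _ => Finset.le_sup (Finset.mem_univ j.castSucc)
    · exact Finset.le_sup (Finset.mem_univ _)

lemma sup_fin_one (x : Fin 1 → ℕ) : Finset.univ.sup x = x 0 := by
  apply le_antisymm
  · exact Finset.sup_le fun j _ => by rw [Subsingleton.elim j 0]
  · exact Finset.le_sup (Finset.mem_univ _)

lemma pow_identity (m d : ℕ) :
    (m+1)^(d+2) = m^(d+2) + m^(d+1) + (m+1) * ((m+1)^(d+1) - m^(d+1)) := by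
  have h : m^(d+1) ≤ (m+1)^(d+1) := Nat.pow_le_pow_left (Nat.le_succ m) _
  obtain ⟨c, hc⟩ := Nat.le.dest h
  have h2 : (m+1)^(d+1) - m^(d+1) = c := by omega
  have h3 : (m+1)^(d+2) = (m+1) * (m+1)^(d+1) := by ring
  have h4 : m^(d+2) = m * m^(d+1) := by ring
  rw [h2, h3, h4, ← hc]; ring

lemma iroot_spec (d z : ℕ) (hd : 0 < d) :
    (iroot d z)^d ≤ z ∧ z < (iroot d z + 1)^d := by
  have h1 : (iroot d z)^d ≤ z := by
    have := Nat.findGreatest_spec (P := fun m => m ^ d ≤ z) (m := 0) (Nat.zero_le z)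
      (by show 0 ^ d ≤ z; rw [Nat.zero_pow hd]; exact Nat.zero_le z)
    exact this
  refine ⟨h1, ?_⟩
  by_cases hk : iroot d z + 1 ≤ z
  · have := Nat.findGreatest_is_greatest (P := fun m => m ^ d ≤ z) (k := iroot d z + 1)
      (Nat.lt_succ_self _) hk
    omega
  · have h2 : z ≤ iroot d z := by omega
    calc z < iroot d z + 1 := by omega
      _ ≤ (iroot d z + 1)^d := Nat.le_self_pow hd.ne' _

lemma iroot_eq (d z m : ℕ) (hd : 0 < d) (h1 : m^d ≤ z) (h2 : z < (m+1)^d) :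
    iroot d z = m := by
  obtain ⟨l1, l2⟩ := iroot_spec d z hd
  rcases lt_trichotomy (iroot d z) m with h | h | h
  · have : (m:ℕ)^d ≥ (iroot d z + 1)^d := Nat.pow_le_pow_left (by omega) _
    omega
  · exact h
  · have : (iroot d z)^d ≥ (m + 1)^d := Nat.pow_le_pow_left (by omega) _
    omega

lemma rs_range : ∀ (d : ℕ) (x : Fin (d+1) → ℕ),
    (Finset.univ.sup x)^(d+1) ≤ rosenbergStrong (d+1) x ∧
    rosenbergStrong (d+1) x < (Finset.univ.sup x + 1)^(d+1) := by
  intro d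
  induction d with
  | zero =>
    intro x
    have h : rosenbergStrong 1 x = x 0 := rfl
    rw [h, sup_fin_one, pow_one, pow_one]
    omega
  | succ d ih =>
    intro x
    set x' : Fin (d+1) → ℕ := fun i => x i.castSucc with hx'
    set m := Finset.univ.sup x with hm
    set m' := Finset.univ.sup x' with hm'
    set xl := x (Fin.last (d+1)) with hxl
    have hsup : m = max m' xl := sup_snoc_eq d x
    have hr : rosenbergStrong (d+2) x =
        rosenbergStrong (d+1) x' + m^(d+2) + (m - xl) * ((m+1)^(d+1) - m^(d+1)) := rfl
    obtain ⟨ihl, ihr⟩ := ih x'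
    rw [← hm'] at ihl ihr
    have hexp : ((m:ℕ)+1)^(d+1+1) = (m+1)^(d+2) := rfl
    have hb : m^(d+1) ≤ (m+1)^(d+1) := Nat.pow_le_pow_left (Nat.le_succ m) _
    have hid := pow_identity m d
    constructor
    · calc m^(d+2) ≤ rosenbergStrong (d+1) x' + m^(d+2) := Nat.le_add_left _ _
        _ ≤ _ := by rw [hr]; omega
    · rw [hr]
      rcases Nat.lt_or_ge xl m with hlt | hge
      · -- xl < m, so m' = m
        have hm'm : m' = m := by omega
        rw [hm'm] at ihl ihr
        have hmxl : m - xl ≤ m := Nat.sub_le _ _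
        have key : (m - xl) * ((m+1)^(d+1) - m^(d+1)) ≤ m * ((m+1)^(d+1) - m^(d+1)) :=
          Nat.mul_le_mul_right _ hmxl
        have hiΔ : (m+1) * ((m+1)^(d+1) - m^(d+1)) =
            m * ((m+1)^(d+1) - m^(d+1)) + ((m+1)^(d+1) - m^(d+1)) := by ring
        omega
      · -- xl = m
        have hxlm : xl = m := by
          have : xl ≤ m := hsup ▸ le_max_right _ _
          omega
        rw [hxlm, Nat.sub_self, Nat.zero_mul, Nat.add_zero]
        have hm'le : m' ≤ m := by omega
        have : (m'+1)^(d+1) ≤ (m+1)^(d+1) := Nat.pow_le_pow_left (by omega) _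
        have hm1 : m * m^(d+1) ≤ m * (m+1)^(d+1) := Nat.mul_le_mul_left _ hb
        have e1 : (m+1)^(d+2) = (m+1)^(d+1) + m * (m+1)^(d+1) := by ring
        have e2 : m^(d+2) = m * m^(d+1) := by ring
        omega

lemma sup_snoc (d : ℕ) (v : Fin (d+1) → ℕ) (a : ℕ) :
    Finset.univ.sup (Fin.snoc v a : Fin (d+2) → ℕ) = max (Finset.univ.sup v) a := by
  rw [sup_snoc_eq]
  simp [Fin.snoc_castSucc, Fin.snoc_last]

lemma rs_snoc (d : ℕ) (v : Fin (d+1) → ℕ) (a : ℕ) :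
    rosenbergStrong (d+2) (Fin.snoc v a) =
      rosenbergStrong (d+1) v + (max (Finset.univ.sup v) a)^(d+2) +
        (max (Finset.univ.sup v) a - a) *
          ((max (Finset.univ.sup v) a + 1)^(d+1) - (max (Finset.univ.sup v) a)^(d+1)) := by
  have e : (fun i : Fin (d+1) => (Fin.snoc v a : Fin (d+2) → ℕ) i.castSucc) = v := by
    funext i; simp
  have h0 : rosenbergStrong (d+2) (Fin.snoc v a) =
      rosenbergStrong (d + 1) (fun i => (Fin.snoc v a : Fin (d+2) → ℕ) i.castSucc) +
        (Finset.univ.sup (Fin.snoc v a : Fin (d+2) → ℕ)) ^ (d + 2) +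
        (Finset.univ.sup (Fin.snoc v a : Fin (d+2) → ℕ) -
          (Fin.snoc v a : Fin (d+2) → ℕ) (Fin.last (d + 1))) *
          ((Finset.univ.sup (Fin.snoc v a : Fin (d+2) → ℕ) + 1) ^ (d + 1) -
            (Finset.univ.sup (Fin.snoc v a : Fin (d+2) → ℕ)) ^ (d + 1)) := rfl
  rw [h0, e, sup_snoc, Fin.snoc_last]

lemma rsInv_unfold (d z : ℕ) :
    rosenbergStrongInv (d+2) z = Fin.snoc (rosenbergStrongInv (d+1)
      (z - (iroot (d+2) z)^(d+2) - ((iroot (d+2) z) - ((iroot (d+2) z) -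
        (z - (iroot (d+2) z)^(d+2) - (iroot (d+2) z)^(d+1)) /
          (((iroot (d+2) z)+1)^(d+1) - (iroot (d+2) z)^(d+1)))) *
        (((iroot (d+2) z)+1)^(d+1) - (iroot (d+2) z)^(d+1))))
      ((iroot (d+2) z) - (z - (iroot (d+2) z)^(d+2) - (iroot (d+2) z)^(d+1)) /
        (((iroot (d+2) z)+1)^(d+1) - (iroot (d+2) z)^(d+1))) := rfl

lemma iroot_le_of_lt (d z m : ℕ) (hd : 0 < d) (h : z < (m+1)^d) : iroot d z ≤ m := by
  by_contra h'
  have h1 := (iroot_spec d z hd).1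
  have h2 : (m+1)^d ≤ (iroot d z)^d := Nat.pow_le_pow_left (by omega) _
  omega

lemma rs_inv_spec : ∀ (d z : ℕ),
    rosenbergStrong (d+1) (rosenbergStrongInv (d+1) z) = z ∧
    Finset.univ.sup (rosenbergStrongInv (d+1) z) = iroot (d+1) z := by
  intro d
  induction d with
  | zero =>
    intro z
    refine ⟨rfl, ?_⟩
    rw [sup_fin_one]
    show z = iroot 1 z
    exact (iroot_eq 1 z z one_pos (by simpa using le_refl z) (by simpa using Nat.lt_succ_self z)).symm
  | succ d ih =>
    intro z
    rw [rsInv_unfold]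
    set m := iroot (d+2) z with hm
    set Δ := (m+1)^(d+1) - m^(d+1) with hΔ
    set q := (z - m^(d+2) - m^(d+1)) / Δ with hq
    set xd := m - q with hxd
    set w := z - m^(d+2) - (m - xd) * Δ with hw
    set v := rosenbergStrongInv (d+1) w with hv
    obtain ⟨ih1, ih2⟩ := ih w
    rw [← hv] at ih1 ih2
    obtain ⟨hz1, hz2⟩ := iroot_spec (d+2) z (by omega)
    rw [← hm] at hz1 hz2
    have hb : m^(d+1) ≤ (m+1)^(d+1) := Nat.pow_le_pow_left (Nat.le_succ m) _
    have hbs : m^(d+1) < (m+1)^(d+1) := Nat.pow_lt_pow_left (Nat.lt_succ_self m) (by omega)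
    have hΔpos : 0 < Δ := by omega
    have hΔeq : Δ + m^(d+1) = (m+1)^(d+1) := by rw [hΔ]; omega
    have hid : (m+1)^(d+2) = m^(d+2) + m^(d+1) + m * Δ + Δ := by
      rw [hΔ]
      have h1 := pow_identity m d
      have h2 : (m+1)*((m+1)^(d+1)-m^(d+1)) =
          m*((m+1)^(d+1)-m^(d+1)) + ((m+1)^(d+1)-m^(d+1)) := by ring
      omega
    have hqlt : q < m + 1 := by
      rw [hq, Nat.div_lt_iff_lt_mul hΔpos]
      have h3 : (m+1) * Δ = m * Δ + Δ := by ring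
      rw [h3]
      omega
    have hdm := Nat.div_add_mod (z - m^(d+2) - m^(d+1)) Δ
    rw [← hq] at hdm
    have hmod := Nat.mod_lt (z - m^(d+2) - m^(d+1)) hΔpos
    set r := (z - m^(d+2) - m^(d+1)) % Δ with hr
    clear hq hr
    clear_value xd q r
    have hmxd : m - xd = q := by omega
    have hE : (m - xd) * Δ = Δ * q := by rw [hmxd]; ring
    have hwz : w = z - m^(d+2) - Δ * q := by rw [hw, hE]
    clear hw
    clear_value w
    -- the max is m
    have hM : max (Finset.univ.sup v) xd = m := by
      rcases Nat.eq_zero_or_pos q with hq0 | hqpos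
      · have hxdm : xd = m := by omega
        rw [hq0] at hdm hwz
        have hwlt : w < (m+1)^(d+1) := by
          rw [hwz]
          omega
        have : Finset.univ.sup v ≤ m := by
          rw [ih2]
          exact iroot_le_of_lt (d+1) w m (by omega) hwlt
        omega
      · have hΔq : Δ ≤ Δ * q := Nat.le_mul_of_pos_right Δ hqpos
        have hwb : m^(d+1) ≤ w ∧ w < (m+1)^(d+1) := by
          constructor
          · rw [hwz]; omega
          · rw [hwz]; omega
        have : iroot (d+1) w = m := iroot_eq (d+1) w m (by omega) hwb.1 hwb.2
        rw [ih2, this]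
        omega
    constructor
    · rw [rs_snoc, hM, ← hΔ, ih1, hE, hwz]
      omega
    · rw [sup_snoc, hM]

lemma rs_left_inv : ∀ (d : ℕ) (x : Fin (d+1) → ℕ),
    rosenbergStrongInv (d+1) (rosenbergStrong (d+1) x) = x := by
  intro d
  induction d with
  | zero =>
    intro x
    funext i
    fin_cases i
    rfl
  | succ d ih =>
    intro x
    set x' : Fin (d+1) → ℕ := fun i => x i.castSucc with hx'
    set xl := x (Fin.last (d+1)) with hxl
    have hxsnoc : x = Fin.snoc x' xl := by
      funext i
      induction i using Fin.lastCases with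
      | last => rw [Fin.snoc_last]
      | cast j => rw [Fin.snoc_castSucc]
    set m' := Finset.univ.sup x' with hm'
    have hxlm : xl ≤ max m' xl := le_max_right _ _
    rw [hxsnoc, rs_snoc, ← hm']
    set m := max m' xl with hmm
    set Δ := (m+1)^(d+1) - m^(d+1) with hΔ
    set z := rosenbergStrong (d+1) x' + m^(d+2) + (m - xl) * Δ with hz
    -- range of z
    obtain ⟨hr1, hr2⟩ := rs_range (d+1) (Fin.snoc x' xl)
    rw [rs_snoc, sup_snoc, ← hm', ← hmm, ← hΔ, ← hz] at hr1 hr2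
    have hmz : iroot (d+2) z = m := iroot_eq (d+2) z m (by omega) hr1 hr2
    obtain ⟨hr1', hr2'⟩ := rs_range d x'
    rw [← hm'] at hr1' hr2'
    have hb : m^(d+1) ≤ (m+1)^(d+1) := Nat.pow_le_pow_left (Nat.le_succ m) _
    have hbs : m^(d+1) < (m+1)^(d+1) := Nat.pow_lt_pow_left (Nat.lt_succ_self m) (by omega)
    have hΔpos : 0 < Δ := by omega
    have hΔeq : Δ + m^(d+1) = (m+1)^(d+1) := by rw [hΔ]; omega
    rw [rsInv_unfold, hmz, ← hΔ]
    -- compute the quotient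
    have hquot : (z - m^(d+2) - m^(d+1)) / Δ = m - xl := by
      rcases Nat.lt_or_ge xl m with hlt | hge
      · -- xl < m : m' = m, r' ∈ [m^(d+1), (m+1)^(d+1))
        have hm'm : m' = m := by omega
        rw [hm'm] at hr1' hr2'
        have h1 : z - m^(d+2) - m^(d+1) =
            (rosenbergStrong (d+1) x' - m^(d+1)) + (m - xl) * Δ := by
          rw [hz]; omega
        rw [h1, Nat.add_mul_div_right _ _ hΔpos,
          Nat.div_eq_of_lt (by omega)]
        omega
      · -- xl = m
        have hxleq : xl = m := by omega
        have hmlt : m' ≤ m := by omega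
        have : (m'+1)^(d+1) ≤ (m+1)^(d+1) := Nat.pow_le_pow_left (by omega) _
        have h1 : z - m^(d+2) - m^(d+1) < Δ := by
          have hc : (m - xl) * Δ = 0 := by rw [hxleq]; simp
          rw [hz]
          omega
        rw [Nat.div_eq_of_lt h1]
        omega
    rw [hquot]
    have hxdl : m - (m - xl) = xl := by omega
    rw [hxdl]
    have hw : z - m^(d+2) - (m - xl) * Δ = rosenbergStrong (d+1) x' := by
      rw [hz]; omega
    rw [hw, ih x', ← hxsnoc]

/-- For every positive integer `d`, the Rosenberg-Strong `d`-tupling function is a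
bijection from ℕ^d to ℕ, and `F_d` is its inverse: `r_d(F_d(z)) = z` and
`F_d(r_d(x)) = x`. -/
theorem rosenbergStrong_bijective_inverse (d : ℕ) (hd : 0 < d) :
    Function.Bijective (rosenbergStrong d) ∧
      (∀ z : ℕ, rosenbergStrong d (rosenbergStrongInv d z) = z) ∧
      (∀ x : Fin d → ℕ, rosenbergStrongInv d (rosenbergStrong d x) = x) := by
  obtain ⟨e, rfl⟩ : ∃ e, d = e + 1 := ⟨d - 1, by omega⟩
  exact ⟨⟨Function.LeftInverse.injective (rs_left_inv e),
      fun z => ⟨rosenbergStrongInv (e+1) z, (rs_inv_spec e z).1⟩⟩,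
    fun z => (rs_inv_spec e z).1, rs_left_inv e⟩
end
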